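/- arXiv:0804.1095 — 11 statements merged into one kernel-verified Lean document; each statement's English description precedes it below -/
import Mathlib

section
/- If a pegging move is applied to a distribution D on a graph G, transforming it into D', then for every vertex t, the weight of D' with respect to t is at most the weight of D with respect to t, where the weight of a distribution with respect to t is the sum over pegged vertices u of σ^{d(u,t)}, with σ = (√5−1)/2. -/
open SimpleGraph Finset

variable {V : Type*} {W : Type*}

/-- A pegging move: remove pegs from adjacent pegged vertices `u, v`,
place a peg on an empty vertex `w` adjacent to `v`. -/
def PegMove {V : Type*} (G : SimpleGraph V) [DecidableEq V] (D D' : Finset V) : Prop :=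
  ∃ u v w : V, G.Adj u v ∧ G.Adj v w ∧ u ∈ D ∧ v ∈ D ∧ w ∉ D ∧
    D' = insert w ((D.erase u).erase v)

/-- The reach of a distribution: all vertices reachable by a finite
sequence of pegging moves. -/
def PegReach {V : Type*} (G : SimpleGraph V) [DecidableEq V] (D : Finset V) : Set V :=
  {t | ∃ D' : Finset V, Relation.ReflTransGen (PegMove G) D D' ∧ t ∈ D'}

/-- The pegging number: least positive `k` such that every distribution of
`k` pegs has full reach. -/
noncomputable def PeggingNumber {V : Type*} (G : SimpleGraph V) [DecidableEq V] : ℕ :=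
  sInf {k | 0 < k ∧ ∀ D : Finset V, D.card = k → PegReach G D = Set.univ}

/-- The optimal pegging number: least positive `k` such that some distribution of
`k` pegs has full reach. -/
noncomputable def OptPeggingNumber {V : Type*} (G : SimpleGraph V) [DecidableEq V] : ℕ :=
  sInf {k | 0 < k ∧ ∃ D : Finset V, D.card = k ∧ PegReach G D = Set.univ}

/-- Weight of a distribution with respect to a target vertex `t`,
with `σ = (√5 - 1)/2`. -/
noncomputable def pegWeight {V : Type*} (G : SimpleGraph V) (D : Finset V) (t : V) : ℝ :=
  ∑ u ∈ D, ((Real.sqrt 5 - 1) / 2) ^ (G.dist u t)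

/-! Since `σ ^ 2 + σ = 1`, every power splits as `σ ^ k = σ ^ (k + 1) + σ ^ (k + 2)`. Along the
path `u ~ v ~ w` distances to `t` grow by at most one per step, so splitting `σ ^ d(w,t)` gives
two terms bounded by `σ ^ d(v,t)` and `σ ^ d(u,t)`: the new peg weighs at most the two it replaces. -/

local notation "σ" => ((Real.sqrt 5 - 1) / 2 : ℝ)

lemma sigma_nonneg : 0 ≤ σ := by
  have : 1 ≤ Real.sqrt 5 := Real.one_le_sqrt.2 (by norm_num)
  linarith

lemma sigma_sq_add_sigma : σ ^ 2 + σ = 1 := by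
  nlinarith [Real.sq_sqrt (show (0 : ℝ) ≤ 5 by norm_num)]

lemma pow_le_pow_add_pow_of_sq_add_eq_one {s : ℝ} (hs0 : 0 ≤ s) (hs : s ^ 2 + s = 1)
    {a b c : ℕ} (hbc : b ≤ c + 1) (hab : a ≤ b + 1) : s ^ c ≤ s ^ a + s ^ b := by
  have hs1 : s ≤ 1 := by nlinarith
  have anti {m n : ℕ} (hmn : m ≤ n) : s ^ n ≤ s ^ m := pow_le_pow_of_le_one hs0 hs1 hmn
  calc s ^ c = s ^ (c + 1) + s ^ (c + 2) := by linear_combination (-s ^ c) * hs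
    _ ≤ s ^ b + s ^ (b + 1) := add_le_add (anti hbc) (anti (by omega))
    _ ≤ s ^ a + s ^ b := by linarith [anti hab]

-- Also holds when `t` is unreachable, since `dist` is then `0` on both sides.
lemma SimpleGraph.Adj.dist_le_dist_add_one {V : Type*} {G : SimpleGraph V} {x y : V}
    (hxy : G.Adj x y) (t : V) : G.dist x t ≤ G.dist y t + 1 := by
  have := hxy.reachable.dist_triangle_left t
  rw [dist_eq_one_iff_adj.2 hxy] at this
  omega

theorem pegWeight_mono_of_pegMove {V : Type*} (G : SimpleGraph V) [DecidableEq V]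
    (D D' : Finset V) (h : PegMove G D D') (t : V) :
    pegWeight G D' t ≤ pegWeight G D t := by
  obtain ⟨u, v, w, huv, hvw, hu, hv, hw, rfl⟩ := h
  have key : σ ^ G.dist w t ≤ σ ^ G.dist u t + σ ^ G.dist v t :=
    pow_le_pow_add_pow_of_sq_add_eq_one sigma_nonneg sigma_sq_add_sigma
      (hvw.dist_le_dist_add_one t) (huv.dist_le_dist_add_one t)
  have hv' : v ∈ D.erase u := mem_erase.2 ⟨huv.ne', hv⟩
  have hw' : w ∉ (D.erase u).erase v := fun hw' => hw (mem_of_mem_erase (mem_of_mem_erase hw'))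
  rw [pegWeight, pegWeight, sum_insert hw', sum_erase_eq_sub hv', sum_erase_eq_sub hu]
  linarith
end

section
/- If D' ⊆ D are two distributions on a graph G, then the reach of D' is contained in the reach of D (monotonicity of reach under adding pegs). -/
open SimpleGraph Finset

variable {V : Type*} {W : Type*}

/-! Extra pegs never block a move: a move from `D' ⊆ D` either is also a move from `D`, or lands
on a vertex already pegged in `D`, so `D` itself covers the result. Thus every sequence of moves
from `D'` is shadowed by one from `D` whose pegs always contain those of the first. -/

section

variable (G : SimpleGraph V) [DecidableEq V]

lemma PegMove.exists_superset_of_subset {D D' E' : Finset V} (h : D' ⊆ D)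
    (hm : PegMove G D' E') :
    ∃ E, Relation.ReflTransGen (PegMove G) D E ∧ E' ⊆ E := by
  obtain ⟨u, v, w, huv, hvw, hu, hv, -, rfl⟩ := hm
  by_cases hwD : w ∈ D
  · exact ⟨D, .refl, insert_subset hwD
      ((erase_subset v _).trans ((erase_subset u _).trans h))⟩
  · exact ⟨_, .single ⟨u, v, w, huv, hvw, h hu, h hv, hwD, rfl⟩,
      insert_subset_insert w (erase_subset_erase v (erase_subset_erase u h))⟩

lemma exists_pegMoves_superset_of_subset {D D' E' : Finset V} (h : D' ⊆ D)
    (hc : Relation.ReflTransGen (PegMove G) D' E') :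
    ∃ E, Relation.ReflTransGen (PegMove G) D E ∧ E' ⊆ E := by
  induction hc with
  | refl => exact ⟨D, .refl, h⟩
  | tail _ hstep ih =>
    obtain ⟨E, hDE, hsub⟩ := ih
    obtain ⟨F, hEF, hsub'⟩ := PegMove.exists_superset_of_subset G hsub hstep
    exact ⟨F, hDE.trans hEF, hsub'⟩

end

theorem pegReach_mono {V : Type*} (G : SimpleGraph V) [DecidableEq V]
    (D D' : Finset V) (h : D' ⊆ D) :
    PegReach G D' ⊆ PegReach G D := by
  rintro t ⟨E', hc, ht⟩
  obtain ⟨E, hDE, hsub⟩ := exists_pegMoves_superset_of_subset G h hc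
  exact ⟨E, hDE, hsub ht⟩
end

section
/- For n ≥ 5, the pegging number of the cycle C_n is n − 2. -/
open SimpleGraph Finset

variable {V : Type*} {W : Type*}

/-!
With `n - 2` pegs only one vertex other than the target `t` is empty, so one of the pairs
`t + 2, t + 1` and `t - 2, t - 1` is fully pegged and jumps into `t`.

Conversely, put `k ≤ n - 3` pegs on the vertices `2, …, n - 2` and read vertices as integers
in `[0, n)`. Weigh a distribution by the two Fibonacci potentials `∑ fib (x + 1)` and
`∑ fib (n - x + 1)`. A jump avoiding `0` runs along the path `1, …, n - 1`, and by
`fib (m + 2) = fib m + fib (m + 1)` it increases neither potential. Initially both are below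
`fib (n + 1)`, whereas a jump into `0` needs pegs on `n - 2, n - 1` or on `2, 1`, which already
weigh `fib (n + 1)` in one of the two potentials.
-/

open Nat

theorem Finset.sum_insert_erase_erase_add {M : Type*} [DecidableEq V] [AddCommMonoid M]
    (f : V → M) {D : Finset V} {u v w : V} (hu : u ∈ D) (hv : v ∈ D) (huv : u ≠ v)
    (hw : w ∉ D) :
    ∑ x ∈ insert w ((D.erase u).erase v), f x + (f u + f v) = ∑ x ∈ D, f x + f w := by
  rw [sum_insert fun h => hw (mem_of_mem_erase (mem_of_mem_erase h)), ← sum_erase_add _ _ hu,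
    ← sum_erase_add _ _ (mem_erase.mpr ⟨huv.symm, hv⟩)]
  abel

theorem Finset.card_add_three_le [Fintype V] [DecidableEq V] {D : Finset V} {x y z : V}
    (hxy : x ≠ y) (hxz : x ≠ z) (hyz : y ≠ z) (hx : x ∉ D) (hy : y ∉ D) (hz : z ∉ D) :
    D.card + 3 ≤ Fintype.card V := by
  have hsub : {x, y, z} ⊆ Dᶜ := by simp [insert_subset_iff, hx, hy, hz]
  have := card_le_card hsub
  rw [card_eq_three.mpr ⟨x, y, z, hxy, hxz, hyz, rfl⟩, card_compl] at this
  have := card_le_univ D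
  omega

section Pegging

variable [DecidableEq V] {G : SimpleGraph V}

theorem mem_pegReach_of_adj {D : Finset V} {u v w : V} (huv : G.Adj u v) (hvw : G.Adj v w)
    (hu : u ∈ D) (hv : v ∈ D) : w ∈ PegReach G D := by
  by_cases hw : w ∈ D
  · exact ⟨D, .refl, hw⟩
  · exact ⟨_, .single ⟨u, v, w, huv, hvw, hu, hv, hw, rfl⟩, mem_insert_self _ _⟩

theorem notMem_pegReach_of_invariant (P : Finset V → Prop)
    (hmove : ∀ D D', P D → PegMove G D D' → P D') {t : V} (ht : ∀ D, P D → t ∉ D)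
    {D : Finset V} (hD : P D) : t ∉ PegReach G D := by
  rintro ⟨D', hDD', htD'⟩
  exact ht D' (Relation.ReflTransGen.rec hD (fun _ h ih => hmove _ _ ih h) hDD') htD'

theorem peggingNumber_eq {p : ℕ} (hp : 0 < p)
    (hreach : ∀ D : Finset V, D.card = p → PegReach G D = Set.univ)
    (hstuck : ∀ k, 0 < k → k < p →
      ∃ D : Finset V, D.card = k ∧ PegReach G D ≠ Set.univ) :
    PeggingNumber G = p := by
  refine le_antisymm (Nat.sInf_le ⟨hp, hreach⟩) (le_csInf ⟨p, hp, hreach⟩ ?_)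
  rintro k ⟨hk, hkreach⟩
  by_contra! hkp
  obtain ⟨D, hDk, hD⟩ := hstuck k hk hkp
  exact hD (hkreach D hDk)

end Pegging

section FibPotential

variable {α : Type*}

theorem fib_succ_le_add_of_jump {a b c : ℕ} (hab : a = b + 1 ∨ b = a + 1)
    (hcb : c = b + 1 ∨ b = c + 1) (hac : a ≠ c) :
    fib (c + 1) ≤ fib (a + 1) + fib (b + 1) := by
  rcases hcb with rfl | rfl
  · obtain rfl : b = a + 1 := by omega
    exact (fib_add_two (n := a + 1)).le
  · exact le_add_left (fib_mono (by omega))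

theorem sum_fib_lt_fib_succ {s : Finset α} {g : α → ℕ} {n : ℕ}
    (hg : Set.InjOn g s) (hlt : ∀ x ∈ s, g x < n) : ∑ x ∈ s, fib (g x) < fib (n + 1) := by
  rw [← sum_image hg, fib_succ_eq_succ_sum, Nat.lt_succ_iff]
  exact sum_le_sum_of_subset fun k hk => by
    obtain ⟨x, hx, rfl⟩ := mem_image.mp hk
    exact mem_range.mpr (hlt x hx)

def fibPotential (c : α → ℕ) (D : Finset α) : ℕ := ∑ x ∈ D, fib (c x + 1)

theorem fib_succ_le_fibPotential {c : α → ℕ} {D : Finset α} {u v : α} {n : ℕ} (hu : u ∈ D)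
    (hv : v ∈ D) (hcu : c u + 2 = n) (hcv : c v + 1 = n) :
    fib (n + 1) ≤ fibPotential c D := by
  have huv : u ≠ v := fun h => by subst h; omega
  obtain rfl := hcu
  calc fib (c u + 2 + 1) = fib (c u + 1) + fib (c v + 1) := by
        rw [show c v = c u + 1 by omega, fib_add_two]
    _ ≤ fibPotential c D :=
        add_le_sum (f := fun x => fib (c x + 1)) (fun _ _ => zero_le _) hu hv huv

theorem fibPotential_jump_le [DecidableEq α] (c : α → ℕ) {D : Finset α} {u v w : α}
    (hu : u ∈ D) (hv : v ∈ D) (hw : w ∉ D) (huv : c u = c v + 1 ∨ c v = c u + 1)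
    (hwv : c w = c v + 1 ∨ c v = c w + 1) (huw : c u ≠ c w) :
    fibPotential c (insert w ((D.erase u).erase v)) ≤ fibPotential c D := by
  have hsum := sum_insert_erase_erase_add (fun x => fib (c x + 1)) hu hv
    (fun h => by subst h; omega) hw
  have hfib := fib_succ_le_add_of_jump huv hwv huw
  unfold fibPotential
  omega

end FibPotential

section Cycle

variable {n : ℕ}

theorem cycleGraph_adj_val {u v : Fin n} (h : (cycleGraph n).Adj u v) :
    u.val = v.val + 1 ∨ v.val = u.val + 1 ∨ (u.val = 0 ∧ v.val + 1 = n) ∨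
      (v.val = 0 ∧ u.val + 1 = n) := by
  have key : ∀ a b : Fin n, (a - b).val = 1 →
      a.val = b.val + 1 ∨ (a.val = 0 ∧ b.val + 1 = n) := by
    intro a b h
    rcases le_or_gt b a with hab | hab
    · rw [Fin.sub_val_of_le hab] at h
      omega
    · rw [Fin.coe_sub_iff_lt.mpr hab] at h
      have := Fin.lt_def.mp hab
      omega
  rcases cycleGraph_adj'.mp h with h | h
  · rcases key u v h with h | h <;> omega
  · rcases key v u h with h | h <;> omega

theorem cycleGraph_adj_add_one [NeZero n] (hn : 1 < n) (x : Fin n) :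
    (cycleGraph n).Adj (x + 1) x :=
  cycleGraph_adj'.mpr <| .inl <| by
    rw [add_sub_cancel_left, Fin.val_one', Nat.mod_eq_of_lt hn]

open Fin.NatCast in
theorem pegReach_cycleGraph_eq_univ [NeZero n] (hn : 5 ≤ n) {D : Finset (Fin n)}
    (hD : D.card = n - 2) : PegReach (cycleGraph n) D = Set.univ := by
  refine Set.eq_univ_of_forall fun t => ?_
  by_cases ht : t ∈ D
  · exact ⟨D, .refl, ht⟩
  set p : ℕ → Fin n := fun k => t + (k : Fin n) with hp
  have hadj : ∀ k, (cycleGraph n).Adj (p (k + 1)) (p k) := fun k => by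
    simpa only [hp, Nat.cast_succ, ← add_assoc] using cycleGraph_adj_add_one (by omega) (p k)
  have hinj : ∀ a < n, ∀ b < n, p a = p b → a = b := fun a ha b hb h => by
    simpa [Nat.mod_eq_of_lt ha, Nat.mod_eq_of_lt hb] using congrArg Fin.val (add_left_cancel h)
  have hp0 : p 0 = t := by simp [hp]
  have hpn : p n = t := by simp [hp]
  by_cases hright : p 2 ∈ D ∧ p 1 ∈ D
  · simpa [hp0] using mem_pegReach_of_adj (hadj 1) (hadj 0) hright.1 hright.2
  by_cases hleft : p (n - 2) ∈ D ∧ p (n - 1) ∈ D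
  · have h1 := (hadj (n - 2)).symm
    have h2 := (hadj (n - 1)).symm
    rw [show n - 2 + 1 = n - 1 by omega] at h1
    rw [show n - 1 + 1 = n by omega, hpn] at h2
    exact mem_pegReach_of_adj h1 h2 hleft.1 hleft.2
  -- otherwise `t`, `p a` and `p b` are three empty vertices
  obtain ⟨a, ha, haD⟩ : ∃ a, (a = 1 ∨ a = 2) ∧ p a ∉ D := by
    by_cases h : p 1 ∈ D
    · exact ⟨2, by simp, fun h2 => hright ⟨h2, h⟩⟩
    · exact ⟨1, by simp, h⟩
  obtain ⟨b, hb, hbD⟩ : ∃ b, (b = n - 2 ∨ b = n - 1) ∧ p b ∉ D := by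
    by_cases h : p (n - 1) ∈ D
    · exact ⟨n - 2, by simp, fun h2 => hleft ⟨h2, h⟩⟩
    · exact ⟨n - 1, by simp, h⟩
  have := card_add_three_le (fun h => by have := hinj 0 (by omega) a (by omega) h; omega)
    (fun h => by have := hinj 0 (by omega) b (by omega) h; omega)
    (fun h => by have := hinj a (by omega) b (by omega) h; omega) (hp0 ▸ ht) haD hbD
  rw [hD, Fintype.card_fin] at this
  omega

def FibBlocked (D : Finset (Fin n)) : Prop :=
  fibPotential Fin.val D < fib (n + 1) ∧ fibPotential (fun x : Fin n => n - x) D < fib (n + 1)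

theorem FibBlocked.val_ne_zero {D : Finset (Fin n)} (hD : FibBlocked D) {x : Fin n}
    (hx : x ∈ D) : x.val ≠ 0 := fun h0 =>
  -- vertex `0` alone weighs `fib (n + 1)` in the second potential
  (single_le_sum (f := fun x : Fin n => fib (n - x + 1)) (fun _ _ => zero_le _) hx).not_gt
    (by simpa [fibPotential, h0] using hD.2)

theorem FibBlocked.pegMove {D D' : Finset (Fin n)} (hD : FibBlocked D)
    (h : PegMove (cycleGraph n) D D') : FibBlocked D' := by
  obtain ⟨u, v, w, huv, hvw, hu, hv, hw, rfl⟩ := h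
  have hu0 := hD.val_ne_zero hu
  have hv0 := hD.val_ne_zero hv
  have huw : u.val ≠ w.val := fun h => hw (Fin.ext h ▸ hu)
  have := cycleGraph_adj_val huv
  have := cycleGraph_adj_val hvw
  have := u.isLt
  have := v.isLt
  by_cases hw0 : w.val = 0
  · exfalso
    rcases (by omega : (u.val + 2 = n ∧ v.val + 1 = n) ∨ (u.val = 2 ∧ v.val = 1)) with h | h
    · exact hD.1.not_ge (fib_succ_le_fibPotential hu hv h.1 h.2)
    · exact hD.2.not_ge (fib_succ_le_fibPotential hu hv (by omega) (by omega))
  · exact ⟨(fibPotential_jump_le _ hu hv hw (by omega) (by omega) (by omega)).trans_lt hD.1,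
      (fibPotential_jump_le _ hu hv hw (by omega) (by omega) (by omega)).trans_lt hD.2⟩

theorem exists_card_eq_zero_notMem_pegReach_cycleGraph [NeZero n] {k : ℕ}
    (hk : k + 3 ≤ n) :
    ∃ D : Finset (Fin n), D.card = k ∧ (0 : Fin n) ∉ PegReach (cycleGraph n) D := by
  obtain ⟨D, hDmid, hDk⟩ := exists_subset_card_eq (n := k)
    (s := Icc (⟨2, by omega⟩ : Fin n) ⟨n - 2, by omega⟩)
    (by simp only [Fin.card_Icc]; omega)
  have hmid : ∀ x ∈ D, 2 ≤ x.val ∧ x.val + 2 ≤ n := fun x hx => by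
    have := mem_Icc.mp (hDmid hx)
    simp only [Fin.le_def] at this
    omega
  refine ⟨D, hDk, notMem_pegReach_of_invariant FibBlocked (fun _ _ hD h => hD.pegMove h)
    (fun _ hD h0 => hD.val_ne_zero h0 rfl) ⟨?_, ?_⟩⟩
  · exact sum_fib_lt_fib_succ (fun x _ y _ h => Fin.ext (by omega))
      fun x hx => by have := hmid x hx; omega
  · refine sum_fib_lt_fib_succ (fun x hx y hy h => Fin.ext ?_) fun x hx => ?_
    · have := hmid x hx
      have := hmid y hy
      simp only at h
      omega
    · have := hmid x hx
      simp only
      omega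

end Cycle

theorem peggingNumber_cycleGraph (n : ℕ) (hn : 5 ≤ n) :
    PeggingNumber (SimpleGraph.cycleGraph n) = n - 2 := by
  have : NeZero n := ⟨by omega⟩
  refine peggingNumber_eq (by omega) (fun D hD => pegReach_cycleGraph_eq_univ hn hD)
    fun k _ hk => ?_
  obtain ⟨D, hDk, hD⟩ :=
    exists_card_eq_zero_notMem_pegReach_cycleGraph (n := n) (k := k) (by omega)
  exact ⟨D, hDk, fun h => hD (h ▸ Set.mem_univ _)⟩
end

section
/- For n ≥ 3, the optimal pegging number of the cycle C_n is ⌈n/2⌉. -/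
open SimpleGraph Finset

variable {V : Type*} {W : Type*}

/-!
Lower bound: a peg can reach an empty vertex `t` only through jumps in one direction `±1`, so
(an invariant of the moves, valid on any circulant graph with a single jump) the initial
distribution has pegs at `t ∓ 1, t ∓ 3, …, t ∓ (2k+1)` and at `t ∓ (2k+2)` for some `k`.
Matching each hole `t` with the peg `t + 1` if there is one, and otherwise with the last odd peg
`t - (2k+1)` of such a cascade, is injective; hence `n ≤ 2 |D|`.

Upper bound: start with pegs at `0` and at the odd vertices below `n - 1`. The moves
`2j, 2j+1 → 2j+2` sweep a peg across all even vertices, and `1, 0 → n - 1` reaches the last one.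
-/

lemma optPeggingNumber_eq_of_forall_le {V : Type*} (G : SimpleGraph V) [DecidableEq V] {k : ℕ}
    (hk : 0 < k) (D₀ : Finset V) (hD₀ : PegReach G D₀ = Set.univ) (hcard : #D₀ ≤ k)
    (hle : ∀ D : Finset V, PegReach G D = Set.univ → k ≤ #D) : OptPeggingNumber G = k := by
  have hD₀k : #D₀ = k := le_antisymm hcard (hle D₀ hD₀)
  refine le_antisymm (Nat.sInf_le ⟨hk, D₀, hD₀k, hD₀⟩) (le_csInf ⟨k, hk, D₀, hD₀k, hD₀⟩ ?_)
  rintro _ ⟨-, D, rfl, hD⟩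
  exact hle D hD

section Circulant

variable {G : Type*} [AddCommGroup G]

/-- Jumped pegs are not removed, so this over-approximates the reach along direction `ε`. -/
inductive ReachableAlong (D : Finset G) (ε : G) : G → Prop
  | mem {t : G} : t ∈ D → ReachableAlong D ε t
  | jump {t : G} : ReachableAlong D ε (t - ε - ε) → t - ε ∈ D → ReachableAlong D ε t

namespace ReachableAlong

variable {D : Finset G} {v δ ε t : G}

lemma of_mem_of_mem (hu : v - δ ∈ D) (hv : v ∈ D) : ReachableAlong D δ (v + δ) :=
  .jump (.mem (by simpa using hu)) (by simpa using hv)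

lemma mem_or_add_mem_of_neg (h : ReachableAlong D (-ε) t) : t ∈ D ∨ t + ε ∈ D := by
  cases h with
  | mem ht => exact .inl ht
  | jump _ ht => exact .inr (by simpa using ht)

lemma of_pegMove [DecidableEq G] (hu : v - δ ∈ D) (hv : v ∈ D) (hw : v + δ ∉ D)
    (hε : ε = δ ∨ ε = -δ) (h : ReachableAlong (insert (v + δ) ((D.erase (v - δ)).erase v)) ε t) :
    ReachableAlong D ε t ∨ t = v + δ := by
  set D' := insert (v + δ) ((D.erase (v - δ)).erase v)
  have mem' : ∀ {x}, x ∈ D' ↔ x = v + δ ∨ x ≠ v ∧ x ≠ v - δ ∧ x ∈ D := by simp [D']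
  have hv' : v ∉ D' := fun h => by grind
  have hu' : v - δ ∉ D' := fun h => by grind
  induction h with
  | mem ht =>
    rcases mem'.1 ht with rfl | ⟨-, -, ht⟩
    · exact .inr rfl
    · exact .inl (.mem ht)
  | @jump t hs hm ih =>
    rcases mem'.1 hm with hm | ⟨hmv, -, hmD⟩
    · rcases hε with rfl | rfl
      · -- the jump would start from `v`, which is empty after the move
        rw [show t - ε - ε = v by grind] at hs
        cases hs with
        | mem h => exact absurd h hv'
        | jump _ h => exact absurd h hu'
      · exact .inl (.mem (by rwa [show t = v by grind]))
    · rcases ih with ih | ih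
      · exact .inl (.jump ih hmD)
      · rcases hε with rfl | rfl
        · exact .inl (.jump (ih ▸ of_mem_of_mem hu hv) hmD)
        · exact absurd (by grind) hmv

end ReachableAlong

lemma exists_of_pegMove_circulantGraph [DecidableEq G] {g : G} {D D' : Finset G}
    (h : PegMove (circulantGraph {g}) D D') :
    ∃ v δ, (δ = g ∨ δ = -g) ∧ v - δ ∈ D ∧ v ∈ D ∧ v + δ ∉ D ∧
      D' = insert (v + δ) ((D.erase (v - δ)).erase v) := by
  obtain ⟨u, v, w, huv, hvw, hu, hv, hw, rfl⟩ := h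
  simp only [circulantGraph_adj, Set.mem_singleton_iff] at huv hvw
  have hwu : w ≠ u := by rintro rfl; exact hw hu
  obtain ⟨δ, hδ, rfl, rfl⟩ : ∃ δ, (δ = g ∨ δ = -g) ∧ u = v - δ ∧ w = v + δ := by
    rcases huv.2 with h | h <;> rcases hvw.2 with h' | h'
    · exact ⟨-g, .inr rfl, by grind, by grind⟩
    · exact absurd (by grind) hwu
    · exact absurd (by grind) hwu
    · exact ⟨g, .inl rfl, by grind, by grind⟩
  exact ⟨v, δ, hδ, hu, hv, hw, rfl⟩

theorem pegReach_circulantGraph_subset [DecidableEq G] (g : G) (D : Finset G) :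
    PegReach (circulantGraph {g}) D ⊆ {t | ReachableAlong D g t ∨ ReachableAlong D (-g) t} := by
  rintro t ⟨D', hD', ht⟩
  induction hD' using Relation.ReflTransGen.head_induction_on with
  | refl => exact .inl (.mem ht)
  | @head D _ hmove _ ih =>
    obtain ⟨v, δ, hδ, hu, hv, hw, rfl⟩ := exists_of_pegMove_circulantGraph hmove
    have hnew : ReachableAlong D g (v + δ) ∨ ReachableAlong D (-g) (v + δ) := by
      rcases hδ with rfl | rfl
      exacts [.inl (.of_mem_of_mem hu hv), .inr (.of_mem_of_mem hu hv)]
    rcases ih with h | h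
    · rcases h.of_pegMove hu hv hw (by grind) with h | rfl
      exacts [.inl h, hnew]
    · rcases h.of_pegMove hu hv hw (by grind) with h | rfl
      exacts [.inr h, hnew]

def IsCascade (D : Finset G) (g t : G) (k : ℕ) : Prop :=
  (∀ i ≤ k, t - (2 * i + 1) • g ∈ D) ∧ t - (2 * k + 2) • g ∈ D

lemma ReachableAlong.mem_or_isCascade {D : Finset G} {g t : G} (h : ReachableAlong D g t) :
    t ∈ D ∨ ∃ k, IsCascade D g t k := by
  induction h with
  | mem ht => exact .inl ht
  | @jump t _ hm ih =>
    right
    rcases ih with ih | ⟨k, hodd, hend⟩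
    · refine ⟨0, fun i hi => ?_, by convert ih using 1; module⟩
      obtain rfl : i = 0 := by omega
      simpa using hm
    · refine ⟨k + 1, fun i hi => ?_, by convert hend using 1; module⟩
      rcases i with _ | i
      · simpa using hm
      · convert hodd i (by omega) using 1; module

namespace IsCascade

variable {D : Finset G} {g t t' : G} {k k' : ℕ}

lemma eq_of_sub_eq (h : IsCascade D g t' k') (ht : t + g ∉ D) (hk : k ≤ k')
    (heq : t - (2 * k + 1) • g = t' - (2 * k' + 1) • g) : t = t' := by
  obtain ⟨d, rfl⟩ := Nat.exists_eq_add_of_le hk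
  rcases d with _ | d
  · simpa using heq
  · refine absurd ?_ ht
    convert h.1 d (by omega) using 1
    linear_combination (norm := module) heq

lemma add_ne_sub (h : IsCascade D g t' k') (ht : t ∉ D) : t + g ≠ t' - (2 * k' + 1) • g := by
  intro heq
  refine ht ?_
  convert h.2 using 1
  linear_combination (norm := module) heq

end IsCascade

theorem card_le_two_mul_card [Fintype G] [DecidableEq G] {g : G} {D : Finset G}
    (hD : ∀ t, ReachableAlong D g t ∨ ReachableAlong D (-g) t) : Fintype.card G ≤ 2 * #D := by
  suffices #Dᶜ ≤ #D by rw [card_compl] at this; omega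
  refine card_le_card_of_forall_subsingleton
    (fun t d => d = t + g ∨ t + g ∉ D ∧ ∃ k, IsCascade D g t k ∧ d = t - (2 * k + 1) • g) ?_ ?_
  · intro t ht
    rw [mem_compl] at ht
    by_cases hg : t + g ∈ D
    · exact ⟨t + g, hg, .inl rfl⟩
    obtain ⟨k, hk⟩ : ∃ k, IsCascade D g t k := by
      rcases hD t with h | h
      · exact h.mem_or_isCascade.resolve_left ht
      · exact (h.mem_or_add_mem_of_neg.resolve_left ht |> hg).elim
    exact ⟨_, hk.1 k le_rfl, .inr ⟨hg, k, hk, rfl⟩⟩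
  · rintro d - t ⟨ht, h | ⟨hg, k, hk, h⟩⟩ t' ⟨ht', h' | ⟨hg', k', hk', h'⟩⟩
    · exact add_right_cancel (h.symm.trans h')
    · exact (hk'.add_ne_sub (mem_compl.1 ht) (h.symm.trans h')).elim
    · exact (hk.add_ne_sub (mem_compl.1 ht') (h'.symm.trans h)).elim
    · rcases le_total k k' with hkk | hkk
      · exact hk'.eq_of_sub_eq hg hkk (h.symm.trans h')
      · exact (hk.eq_of_sub_eq hg' hkk (h'.symm.trans h)).symm

end Circulant

theorem le_two_mul_card_of_pegReach_cycleGraph_eq_univ {n : ℕ} {D : Finset (Fin n)}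
    (h : PegReach (cycleGraph n) D = Set.univ) : n ≤ 2 * #D := by
  cases n with
  | zero => exact Nat.zero_le _
  | succ m =>
    rw [cycleGraph_eq_circulantGraph] at h
    simpa using card_le_two_mul_card fun t =>
      pegReach_circulantGraph_subset 1 D (h ▸ Set.mem_univ t)

lemma cycleGraph_adj_of_val_eq_add_one {n : ℕ} {u v : Fin n} (h : v.val = u.val + 1) :
    (cycleGraph n).Adj u v := by
  rw [cycleGraph_adj']
  right
  rw [Fin.sub_val_of_le (by rw [Fin.le_def]; omega)]
  omega

lemma cycleGraph_adj_of_val_add_one_eq {n : ℕ} (hn : 2 ≤ n) {u v : Fin n} (hu : u.val + 1 = n)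
    (hv : v.val = 0) : (cycleGraph n).Adj u v := by
  rw [cycleGraph_adj']
  right
  have huv : v < u := by rw [Fin.lt_def]; omega
  rw [Fin.coe_sub_iff_lt.mpr huv]
  omega

def cascadeState (n j : ℕ) : Finset (Fin n) :=
  {x | x.val = 2 * j ∨ 2 * j < x.val ∧ x.val % 2 = 1 ∧ x.val + 1 < n}

lemma pegMove_cascadeState {n j : ℕ} (hj : 2 * j + 2 < n) :
    PegMove (cycleGraph n) (cascadeState n j) (cascadeState n (j + 1)) := by
  refine ⟨⟨2 * j, by omega⟩, ⟨2 * j + 1, by omega⟩, ⟨2 * j + 2, by omega⟩,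
    cycleGraph_adj_of_val_eq_add_one rfl, cycleGraph_adj_of_val_eq_add_one rfl, ?_, ?_, ?_, ?_⟩
  all_goals simp only [cascadeState, mem_filter, mem_univ, true_and, true_or]
  · omega
  · omega
  · ext x
    simp only [mem_filter, mem_univ, true_and, mem_insert, mem_erase, ne_eq, Fin.ext_iff]
    omega

lemma reflTransGen_pegMove_cascadeState {n j : ℕ} (hj : 2 * j < n) :
    Relation.ReflTransGen (PegMove (cycleGraph n)) (cascadeState n 0) (cascadeState n j) := by
  induction j with
  | zero => exact .refl
  | succ j ih => exact .tail (ih (by omega)) (pegMove_cascadeState (by omega))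

theorem pegReach_cascadeState_zero {n : ℕ} (hn : 3 ≤ n) :
    PegReach (cycleGraph n) (cascadeState n 0) = Set.univ := by
  refine Set.eq_univ_of_forall fun t => ?_
  obtain ⟨j, hj | hj⟩ := Nat.even_or_odd' t.val
  · exact ⟨_, reflTransGen_pegMove_cascadeState (j := j) (by omega),
      by simp [cascadeState, hj]⟩
  by_cases ht : t.val + 1 < n
  · exact ⟨_, .refl, by simp [cascadeState]; omega⟩
  · refine ⟨_, .single ⟨⟨1, by omega⟩, ⟨0, by omega⟩, t,
      (cycleGraph_adj_of_val_eq_add_one rfl).symm,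
      (cycleGraph_adj_of_val_add_one_eq (by omega) (by omega) rfl).symm, ?_, ?_, ?_, rfl⟩,
      mem_insert_self _ _⟩
    · simp [cascadeState]; omega
    · simp [cascadeState]
    · simp only [cascadeState, mem_filter, mem_univ, true_and]
      omega

lemma card_cascadeState_zero_le (n : ℕ) : #(cascadeState n 0) ≤ (n + 1) / 2 := by
  calc #(cascadeState n 0) ≤ #(range ((n + 1) / 2)) := by
        refine card_le_card_of_injOn (fun x => (x.val + 1) / 2) ?_ ?_
        · intro x hx
          simp [cascadeState] at hx ⊢
          omega
        · intro x hx y hy hxy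
          simp [cascadeState] at hx hy hxy
          omega
    _ = (n + 1) / 2 := card_range _

theorem optPeggingNumber_cycleGraph (n : ℕ) (hn : 3 ≤ n) :
    OptPeggingNumber (SimpleGraph.cycleGraph n) = (n + 1) / 2 :=
  optPeggingNumber_eq_of_forall_le _ (by omega) _ (pegReach_cascadeState_zero hn)
    (card_cascadeState_zero_le n) fun D hD => by
      have := le_two_mul_card_of_pegReach_cycleGraph_eq_univ hD
      omega
end

section
/- For n ≥ 3, the optimal pegging number of the path P_n on n vertices is ⌈n/2⌉. -/
open SimpleGraph Finset

variable {V : Type*} {W : Type*}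

/-!
Identify `P_n` with `{0, …, n - 1} ⊆ ℤ`. Call a peg *active* if a chain of pegs, consecutive ones
at distance at most `2`, joins it to two adjacent pegs, and call a vertex *covered* if it carries
a peg or is adjacent to an active peg. A pegging move never creates new covered vertices, so every
vertex in the reach is covered by the initial distribution. Cutting the line at two consecutive
holes, and matching inside each block every hole with a neighbouring peg on the side of an
adjacent pair, shows that `n` consecutive covered vertices need at least `n / 2` pegs.

Conversely, from `{1, 2, 4, 6, …}` the peg at `1` leapfrogs over the even pegs onto every odd
vertex, and the move `2, 1 → 0` reaches `0`.
-/

section Embedding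

variable [DecidableEq V] [DecidableEq W] {G : SimpleGraph V} {G' : SimpleGraph W}

theorem PegMove.map (f : G ↪g G') {D D' : Finset V} (h : PegMove G D D') :
    PegMove G' (D.map f.toEmbedding) (D'.map f.toEmbedding) := by
  obtain ⟨u, v, w, huv, hvw, hu, hv, hw, rfl⟩ := h
  refine ⟨f u, f v, f w, f.map_adj_iff.2 huv, f.map_adj_iff.2 hvw, mem_map_of_mem _ hu,
    mem_map_of_mem _ hv, by simpa using hw, ?_⟩
  simp [map_insert, map_erase]

theorem image_pegReach_subset (f : G ↪g G') (D : Finset V) :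
    f '' PegReach G D ⊆ PegReach G' (D.map f.toEmbedding) := by
  rintro _ ⟨t, ⟨D', hDD', ht⟩, rfl⟩
  exact ⟨D'.map f.toEmbedding,
    Relation.ReflTransGen.lift (·.map f.toEmbedding) (fun _ _ => PegMove.map f) _ _ hDD',
    mem_map_of_mem _ ht⟩

end Embedding

theorem optPeggingNumber_eq_of_forall_le_card [DecidableEq V] {G : SimpleGraph V} {k : ℕ}
    (hk : 0 < k) (hle : ∀ D : Finset V, PegReach G D = Set.univ → k ≤ #D)
    (hex : ∃ D : Finset V, #D ≤ k ∧ PegReach G D = Set.univ) : OptPeggingNumber G = k := by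
  obtain ⟨D, hDk, hD⟩ := hex
  have hk_mem : k ∈ {k | 0 < k ∧ ∃ D : Finset V, #D = k ∧ PegReach G D = Set.univ} :=
    ⟨hk, D, le_antisymm hDk (hle D hD), hD⟩
  refine le_antisymm (Nat.sInf_le hk_mem) (le_csInf ⟨k, hk_mem⟩ ?_)
  rintro _ ⟨-, D, rfl, hD⟩
  exact hle D hD

def PegLinked (D : Finset ℤ) (p q : ℤ) : Prop :=
  p ∈ D ∧ q ∈ D ∧ (p - q).natAbs ≤ 2

def PegConnected (D : Finset ℤ) : ℤ → ℤ → Prop :=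
  Relation.ReflTransGen (PegLinked D)

def IsActivePeg (D : Finset ℤ) (y : ℤ) : Prop :=
  ∃ p, p ∈ D ∧ p + 1 ∈ D ∧ PegConnected D y p

def IsPegCovered (D : Finset ℤ) (x : ℤ) : Prop :=
  x ∈ D ∨ ∃ y, IsActivePeg D y ∧ (x - y).natAbs = 1

section IntLine

variable {D D' : Finset ℤ} {x y z : ℤ}

theorem PegConnected.mem (h : PegConnected D y z) (hz : z ∈ D) : y ∈ D := by
  induction h using Relation.ReflTransGen.head_induction_on with
  | refl => exact hz
  | head hl _ _ => exact hl.1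

theorem IsActivePeg.mem (h : IsActivePeg D y) : y ∈ D :=
  let ⟨_, hp, _, hyp⟩ := h
  hyp.mem hp

theorem IsActivePeg.of_pegConnected (hz : IsActivePeg D z) (h : PegConnected D y z) :
    IsActivePeg D y :=
  let ⟨p, hp, hp1, hzp⟩ := hz
  ⟨p, hp, hp1, h.trans hzp⟩

theorem isActivePeg_of_natAbs_sub_eq_one (hy : y ∈ D) (hz : z ∈ D) (h : (y - z).natAbs = 1) :
    IsActivePeg D y := by
  rcases Int.natAbs_eq_iff.1 h with h | h
  · exact ⟨z, hz, by rwa [show z + 1 = y by omega], .single ⟨hy, hz, by omega⟩⟩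
  · exact ⟨y, hy, by rwa [show y + 1 = z by omega], .refl⟩

section Filter

variable {P : ℤ → Prop} [DecidablePred P]

theorem PegConnected.filter (hP : ∀ p q, PegLinked D p q → P p → P q)
    (h : PegConnected D y z) (hy : P y) : P z ∧ PegConnected (D.filter P) y z := by
  induction h using Relation.ReflTransGen.head_induction_on with
  | refl => exact ⟨hy, .refl⟩
  | @head s c hsc _ ih =>
    obtain ⟨hz, hcz⟩ := ih (hP s c hsc hy)
    exact ⟨hz, .head ⟨mem_filter.2 ⟨hsc.1, hy⟩, mem_filter.2 ⟨hsc.2.1, hP s c hsc hy⟩, hsc.2.2⟩ hcz⟩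

theorem IsActivePeg.filter (hP : ∀ p q, PegLinked D p q → P p → P q)
    (h : IsActivePeg D y) (hy : P y) : IsActivePeg (D.filter P) y := by
  obtain ⟨p, hp, hp1, hyp⟩ := h
  obtain ⟨hPp, hyp⟩ := hyp.filter hP hy
  exact ⟨p, mem_filter.2 ⟨hp, hPp⟩,
    mem_filter.2 ⟨hp1, hP p (p + 1) ⟨hp, hp1, by omega⟩ hPp⟩, hyp⟩

theorem IsPegCovered.filter (hP : ∀ p q, PegLinked D p q → P p → P q)
    (h : IsPegCovered D x) (hx : ∀ y ∈ D, (x - y).natAbs ≤ 1 → P y) :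
    IsPegCovered (D.filter P) x := by
  rcases h with h | ⟨y, hy, hxy⟩
  · exact Or.inl (mem_filter.2 ⟨h, hx x h (by simp)⟩)
  · exact Or.inr ⟨y, hy.filter hP (hx y hy.mem hxy.le), hxy⟩

end Filter

section Jump

variable {v d : ℤ}

theorem PegConnected.of_jump (hd : d = 1 ∨ d = -1) (hw : v + d ∉ D)
    (h : PegConnected (insert (v + d) ((D.erase (v - d)).erase v)) y z) (hz : z ∈ D) :
    ∃ y', (y' = y ∨ y = v + d ∧ (y' = v + 2 * d ∨ y' = v + 3 * d)) ∧ PegConnected D y' z := by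
  -- after the jump, the new peg `v + d` can only be linked to `v + 2 * d` and `v + 3 * d`
  induction h using Relation.ReflTransGen.head_induction_on with
  | refl => exact ⟨z, Or.inl rfl, .refl⟩
  | @head s c hsc _ ih =>
    obtain ⟨c', hc', hc'z⟩ := ih
    have hc'w : c' ≠ v + d := fun h => hw (h ▸ hc'z.mem hz)
    obtain ⟨hs, hc, hsc⟩ := hsc
    simp only [mem_insert, mem_erase] at hs hc
    rcases hs with hsw | ⟨hsv, hsu, hs⟩
    · rcases hc with hcw | ⟨hcv, hcu, hc⟩
      · exact ⟨c', by omega, hc'z⟩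
      · have hcw : c ≠ v + d := fun h => hw (h ▸ hc)
        obtain rfl : c' = c := by omega
        exact ⟨c', by omega, hc'z⟩
    · have hsw : s ≠ v + d := fun h => hw (h ▸ hs)
      refine ⟨s, Or.inl rfl, .head ⟨hs, hc'z.mem hz, ?_⟩ hc'z⟩
      rcases hc with hcw | ⟨-, -, hc⟩
      · rcases hd with rfl | rfl <;> omega
      · have hcw : c ≠ v + d := fun h => hw (h ▸ hc)
        omega

theorem IsPegCovered.of_jump (hd : d = 1 ∨ d = -1) (hu : v - d ∈ D) (hv : v ∈ D)
    (hw : v + d ∉ D) (h : IsPegCovered (insert (v + d) ((D.erase (v - d)).erase v)) x) :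
    IsPegCovered D x := by
  have hv_act : IsActivePeg D v := isActivePeg_of_natAbs_sub_eq_one hv hu (by omega)
  have hv2_act (h : v + 2 * d ∈ D) : IsActivePeg D (v + 2 * d) :=
    hv_act.of_pegConnected (.single ⟨h, hv, by omega⟩)
  rcases h with hx | ⟨y, ⟨p, hp, hp1, hyp⟩, hxy⟩
  · simp only [mem_insert, mem_erase] at hx
    rcases hx with rfl | ⟨-, -, hx⟩
    · exact Or.inr ⟨v, hv_act, by omega⟩
    · exact Or.inl hx
  -- a pair of pegs after the jump that contains the new peg `v + d` is `v + d, v + 2 * d`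
  obtain ⟨q, hq, hyq, hq_act⟩ : ∃ q, q ∈ D ∧
      PegConnected (insert (v + d) ((D.erase (v - d)).erase v)) y q ∧ IsActivePeg D q := by
    have hpp1 : PegLinked _ p (p + 1) := ⟨hp, hp1, by omega⟩
    simp only [mem_insert, mem_erase] at hp hp1
    rcases hp with hpw | ⟨hpv, -, hp⟩
    · obtain ⟨hp1v, -, hp1⟩ := hp1.resolve_left (by omega)
      rw [show p + 1 = v + 2 * d by omega] at hp1 hpp1
      exact ⟨_, hp1, hyp.tail hpp1, hv2_act hp1⟩
    · refine ⟨p, hp, hyp, ?_⟩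
      rcases hp1 with hp1w | ⟨-, -, hp1⟩
      · obtain rfl : p = v + 2 * d := by omega
        exact hv2_act hp
      · exact ⟨p, hp, hp1, .refl⟩
  obtain ⟨y', hy', hy'q⟩ := hyq.of_jump hd hw hq
  have hy'_act := hq_act.of_pegConnected hy'q
  rcases hy' with rfl | ⟨rfl, hy'⟩
  · exact Or.inr ⟨y', hy'_act, hxy⟩
  · by_cases hx : x ∈ D
    · exact Or.inl hx
    have hxv : x ≠ v := fun h => hx (h ▸ hv)
    have hxy' : x ≠ y' := fun h => hx (h ▸ hy'q.mem hq)
    exact Or.inr ⟨y', hy'_act, by omega⟩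

end Jump

theorem IsPegCovered.of_pegMove (h : PegMove (hasse ℤ) D D') (hx : IsPegCovered D' x) :
    IsPegCovered D x := by
  obtain ⟨u, v, w, huv, hvw, hu, hv, hw, rfl⟩ := h
  simp only [hasse_adj, Order.covBy_iff_add_one_eq] at huv hvw
  have huw : u ≠ w := fun h => hw (h ▸ hu)
  obtain ⟨d, hd, rfl, rfl⟩ : ∃ d, (d = 1 ∨ d = -1) ∧ u = v - d ∧ w = v + d :=
    ⟨w - v, by omega, by omega, by omega⟩
  exact hx.of_jump hd hu hv hw

theorem IsPegCovered.of_reflTransGen (h : Relation.ReflTransGen (PegMove (hasse ℤ)) D D')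
    (hx : IsPegCovered D' x) : IsPegCovered D x := by
  induction h with
  | refl => exact hx
  | tail _ hmove ih => exact ih (hx.of_pegMove hmove)

theorem pegReach_hasse_subset_isPegCovered (D : Finset ℤ) :
    PegReach (hasse ℤ) D ⊆ {x | IsPegCovered D x} :=
  fun _ ⟨_, hDD', hx⟩ => IsPegCovered.of_reflTransGen hDD' (Or.inl hx)

end IntLine

theorem sub_le_two_mul_card_of_adjacent_pair {D : Finset ℤ} {a b p : ℤ} (hD : D ⊆ Icc a b)
    (hgap : ∀ g, a ≤ g → g + 1 ≤ b → g ∈ D ∨ g + 1 ∈ D) (hp : p ∈ D) (hp1 : p + 1 ∈ D) :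
    b + 1 - a ≤ 2 * #D := by
  have hpa := mem_Icc.1 (hD hp)
  have hpb := mem_Icc.1 (hD hp1)
  -- each hole is matched with the peg next to it on the side of the pair
  have hhole {x : ℤ} (hx : x ∈ Icc a b \ D) : a ≤ x ∧ x ≤ b ∧ x ∉ D ∧ x ≠ p ∧ x ≠ p + 1 := by
    obtain ⟨hx, hxD⟩ := mem_sdiff.1 hx
    exact ⟨(mem_Icc.1 hx).1, (mem_Icc.1 hx).2, hxD, ne_of_mem_of_not_mem hp hxD |>.symm,
      ne_of_mem_of_not_mem hp1 hxD |>.symm⟩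
  have holes : #(Icc a b \ D) ≤ #D := by
    refine card_le_card_of_injOn (fun x => if x < p then x + 1 else x - 1) (fun x hx => ?_) ?_
    · obtain ⟨hax, hxb, hx, hxp, hxp1⟩ := hhole hx
      dsimp only
      split_ifs with hlt
      · exact (hgap x hax (by omega)).resolve_left hx
      · have := hgap (x - 1) (by omega) (by omega)
        rwa [sub_add_cancel, or_iff_left hx] at this
    · intro x hx y hy hxy
      have := hhole hx
      have := hhole hy
      dsimp only at hxy
      split_ifs at hxy <;> omega
  have hsplit := card_sdiff_add_card_inter (Icc a b) D
  have hinter := card_le_card (inter_subset_right : Icc a b ∩ D ⊆ D)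
  rw [Int.card_Icc] at hsplit
  omega

theorem sub_le_two_mul_card_of_isPegCovered {D : Finset ℤ} {a b : ℤ} (hD : D ⊆ Icc a b)
    (hcov : ∀ x, a ≤ x → x ≤ b → IsPegCovered D x) : b + 1 - a ≤ 2 * #D := by
  obtain ⟨N, hN⟩ : ∃ N : ℕ, b - a < N := ⟨(b - a).toNat + 1, by omega⟩
  induction N generalizing a b D with
  | zero => omega
  | succ N ih =>
  by_cases hgap : ∃ g, a ≤ g ∧ g + 1 ≤ b ∧ g ∉ D ∧ g + 1 ∉ D
  · -- no chain of pegs crosses two consecutive holes, so both sides are counted separately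
    obtain ⟨g, hag, hgb, hg, hg1⟩ := hgap
    have hne {y : ℤ} (hy : y ∈ D) : y ≠ g ∧ y ≠ g + 1 :=
      ⟨ne_of_mem_of_not_mem hy hg, ne_of_mem_of_not_mem hy hg1⟩
    have hleft := ih (D := D.filter (· < g)) (b := g)
      (fun y hy => by
        obtain ⟨hyD, hyg⟩ := mem_filter.1 hy
        have := mem_Icc.1 (hD hyD)
        exact mem_Icc.2 ⟨by omega, by omega⟩)
      (fun x hax hxg => (hcov x hax (by omega)).filter
        (fun p q ⟨_, hq, hpq⟩ hp => by have := hne hq; omega)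
        (fun y hy hxy => by have := hne hy; omega))
      (by omega)
    have hright := ih (D := D.filter (g + 1 < ·)) (a := g + 1)
      (fun y hy => by
        obtain ⟨hyD, hgy⟩ := mem_filter.1 hy
        have := mem_Icc.1 (hD hyD)
        exact mem_Icc.2 ⟨by omega, by omega⟩)
      (fun x hgx hxb => (hcov x (by omega) hxb).filter
        (fun p q ⟨_, hq, hpq⟩ hp => by have := hne hq; omega)
        (fun y hy hxy => by have := hne hy; omega))
      (by omega)
    have hcard : #(D.filter (· < g)) + #(D.filter (g + 1 < ·)) ≤ #D := by
      rw [← card_union_of_disjoint (disjoint_filter.2 fun _ _ h1 h2 => by omega)]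
      exact card_le_card (union_subset (filter_subset _ _) (filter_subset _ _))
    omega
  push Not at hgap
  by_cases hpair : ∃ p, p ∈ D ∧ p + 1 ∈ D
  · obtain ⟨p, hp, hp1⟩ := hpair
    exact sub_le_two_mul_card_of_adjacent_pair hD
      (fun g hag hgb => or_iff_not_imp_left.2 (hgap g hag hgb)) hp hp1
  · -- without an adjacent pair no peg is active
    push Not at hpair
    have hIcc : Icc a b ⊆ D := fun x hx =>
      (hcov x (mem_Icc.1 hx).1 (mem_Icc.1 hx).2).resolve_right
        fun ⟨_, ⟨p, hp, hp1, _⟩, _⟩ => hpair p hp hp1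
    have := card_le_card hIcc
    rw [Int.card_Icc] at this
    omega

def pathGraphEmbeddingInt (n : ℕ) : pathGraph n ↪g hasse ℤ where
  toFun x := x
  inj' _ _ h := Fin.ext (by simpa using h)
  map_rel_iff' {x y} := by
    change (hasse ℤ).Adj (x : ℤ) (y : ℤ) ↔ _
    simp only [hasse_adj, Order.covBy_iff_add_one_eq, pathGraph_adj]
    omega

@[simp]
theorem pathGraphEmbeddingInt_apply {n : ℕ} (x : Fin n) : pathGraphEmbeddingInt n x = x :=
  rfl

theorem le_two_mul_card_of_pegReach_pathGraph {n : ℕ} {D : Finset (Fin n)}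
    (h : PegReach (pathGraph n) D = Set.univ) : n ≤ 2 * #D := by
  let ι := pathGraphEmbeddingInt n
  have hcov (x : ℤ) (h0 : 0 ≤ x) (hx : x ≤ n - 1) : IsPegCovered (D.map ι.toEmbedding) x := by
    refine pegReach_hasse_subset_isPegCovered _
      (image_pegReach_subset ι D ⟨⟨x.toNat, by omega⟩, h ▸ Set.mem_univ _, ?_⟩)
    simp [ι, Int.toNat_of_nonneg h0]
  have hsub : D.map ι.toEmbedding ⊆ Icc 0 (n - 1) := by
    intro x hx
    obtain ⟨y, -, rfl⟩ := mem_map.1 hx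
    simp [ι]
  have := sub_le_two_mul_card_of_isPegCovered hsub hcov
  rw [card_map] at this
  omega

def leapfrog (n i : ℕ) : Finset (Fin n) :=
  {x | (x : ℕ) = 2 * i + 1 ∨ 2 ∣ (x : ℕ) ∧ 2 * i + 2 ≤ x}

theorem mem_leapfrog {n i : ℕ} {x : Fin n} :
    x ∈ leapfrog n i ↔ (x : ℕ) = 2 * i + 1 ∨ 2 ∣ (x : ℕ) ∧ 2 * i + 2 ≤ x := by
  simp [leapfrog]

theorem pegMove_leapfrog {n i : ℕ} (h : 2 * i + 3 < n) :
    PegMove (pathGraph n) (leapfrog n i) (leapfrog n (i + 1)) := by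
  refine ⟨⟨2 * i + 1, by omega⟩, ⟨2 * i + 2, by omega⟩, ⟨2 * i + 3, by omega⟩,
    by simp [pathGraph_adj], by simp [pathGraph_adj], by simp [mem_leapfrog],
    by simp [mem_leapfrog], by simp [mem_leapfrog], ?_⟩
  ext x
  simp only [mem_leapfrog, mem_insert, mem_erase, ne_eq, Fin.ext_iff]
  omega

theorem reflTransGen_leapfrog {n i : ℕ} (h : 2 * i + 1 < n) :
    Relation.ReflTransGen (PegMove (pathGraph n)) (leapfrog n 0) (leapfrog n i) := by
  induction i with
  | zero => exact .refl
  | succ i ih => exact (ih (by omega)).tail (pegMove_leapfrog (by omega))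

theorem pegReach_leapfrog {n : ℕ} (hn : 3 ≤ n) :
    PegReach (pathGraph n) (leapfrog n 0) = Set.univ := by
  refine Set.eq_univ_of_forall fun t => ?_
  by_cases hodd : (t : ℕ) % 2 = 1
  · have hi : (t : ℕ) = 2 * (t / 2) + 1 := by omega
    exact ⟨_, reflTransGen_leapfrog (hi ▸ t.isLt), mem_leapfrog.2 (Or.inl hi)⟩
  by_cases ht0 : (t : ℕ) = 0
  · refine ⟨_, .single ⟨⟨2, by omega⟩, ⟨1, by omega⟩, t, ?_, ?_, ?_, ?_, ?_, rfl⟩,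
      mem_insert_self _ _⟩
    all_goals simp [pathGraph_adj, mem_leapfrog, ht0]
  · exact ⟨_, .refl, mem_leapfrog.2 (Or.inr ⟨by omega, by omega⟩)⟩

theorem card_leapfrog_le (n : ℕ) : #(leapfrog n 0) ≤ (n + 1) / 2 := by
  refine (card_le_card_of_injOn (fun x : Fin n => (x : ℕ) / 2) (t := range ((n + 1) / 2))
    (fun x hx => ?_) fun x hx y hy hxy => ?_).trans (card_range _).le
  · have := mem_leapfrog.1 hx
    simp only [coe_range, Set.mem_Iio]
    omega
  · have := mem_leapfrog.1 hx
    have := mem_leapfrog.1 hy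
    exact Fin.ext (by simp only at hxy; omega)

theorem optPeggingNumber_pathGraph (n : ℕ) (hn : 3 ≤ n) :
    OptPeggingNumber (SimpleGraph.pathGraph n) = (n + 1) / 2 :=
  optPeggingNumber_eq_of_forall_le_card (by omega)
    (fun D hD => by have := le_two_mul_card_of_pegReach_pathGraph hD; omega)
    ⟨leapfrog n 0, card_leapfrog_le n, pegReach_leapfrog hn⟩
end

section
/- For any two graphs G and H each having at least one vertex, the join G + H satisfies p(G + H) = 2 and P(G + H) = max(α(G), α(H)) + 1. -/
open SimpleGraph Finset

variable {V : Type*} {W : Type*}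

/-- The join of two graphs: all cross edges are present. -/
def GraphJoin {V W : Type*} (G : SimpleGraph V) (H : SimpleGraph W) : SimpleGraph (V ⊕ W) where
  Adj x y := match x, y with
    | Sum.inl a, Sum.inl b => G.Adj a b
    | Sum.inr a, Sum.inr b => H.Adj a b
    | Sum.inl _, Sum.inr _ => True
    | Sum.inr _, Sum.inl _ => True
  symm := ⟨by rintro (a | a) (b | b) h <;> first | exact h.symm | trivial⟩
  loopless := ⟨by rintro (a | a) h <;> exact (SimpleGraph.irrefl _) h⟩

/-- The independence number of a graph. -/
noncomputable def indepNum {V : Type*} (G : SimpleGraph V) : ℕ :=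
  sSup {n | ∃ s : Finset V, s.card = n ∧ ∀ u ∈ s, ∀ v ∈ s, ¬ G.Adj u v}

/-!
Pegs on both sides of the join reach everything in one move, since each side is joined to the
other; a single peg reaches nothing new, so `p = 2`. A peg distribution on an independent set of
the join admits no move at all, and the independent sets of the join are those of `G` or of `H`,
which gives `P ≥ max (α G) (α H) + 1`. Conversely, `max (α G) (α H) + 1` pegs contain an edge
`ab`; if all pegs lie on one side, the move `a, b ↦ w` with `w` on the other side creates a
peg distribution meeting both sides, unless only two pegs are used, in which case `α = 1` and
the join is complete.
-/

lemma indepNum_eq_simpleGraph_indepNum {V : Type*} (G : SimpleGraph V) :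
    _root_.indepNum G = G.indepNum := by
  have h (s : Finset V) : (∀ u ∈ s, ∀ v ∈ s, ¬ G.Adj u v) ↔ G.IsIndepSet (s : Set V) :=
    ⟨fun h u hu v hv _ => h u hu v hv, fun h u hu v hv huv => h hu hv huv.ne huv⟩
  simp only [_root_.indepNum, SimpleGraph.indepNum, isNIndepSet_iff, h, and_comm]

section IndepNum

variable {X : Type*} [Finite X] {J : SimpleGraph X}

lemma one_le_indepNum [Nonempty X] : 1 ≤ J.indepNum := by
  obtain ⟨x⟩ := ‹Nonempty X›
  simpa using (show J.IsIndepSet ↑({x} : Finset X) by simp).card_le_indepNum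

lemma eq_top_of_indepNum_le_one (h : J.indepNum ≤ 1) : J = ⊤ := by
  classical
  ext x y
  refine ⟨fun hxy => hxy.ne, fun hxy => by_contra fun hnadj => ?_⟩
  have hpair : J.IsIndepSet (({x, y} : Finset X) : Set X) := by
    rw [coe_pair, isIndepSet_iff, Set.pairwise_pair]
    exact fun _ => ⟨hnadj, fun hyx => hnadj hyx.symm⟩
  have := hpair.card_le_indepNum
  rw [card_pair hxy] at this
  omega

end IndepNum

section Pegging

variable {X : Type*} [DecidableEq X] {J : SimpleGraph X} {D D' : Finset X} {u v t : X}

lemma subset_pegReach : (D : Set X) ⊆ PegReach J D :=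
  fun _ ht => ⟨D, .refl, ht⟩

lemma PegMove.pegReach_subset (h : PegMove J D D') : PegReach J D' ⊆ PegReach J D :=
  fun _ ⟨E, hE, ht⟩ => ⟨E, .head h hE, ht⟩

lemma PegMove.pegReach_eq_univ (h : PegMove J D D') (h' : PegReach J D' = Set.univ) :
    PegReach J D = Set.univ :=
  Set.eq_univ_of_univ_subset (h' ▸ h.pegReach_subset)

lemma mem_pegReach_of_adj_s10 (hu : u ∈ D) (hv : v ∈ D) (huv : J.Adj u v) (hvt : J.Adj v t) :
    t ∈ PegReach J D := by
  by_cases ht : t ∈ D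
  · exact subset_pegReach ht
  · exact PegMove.pegReach_subset ⟨u, v, t, huv, hvt, hu, hv, ht, rfl⟩
      (subset_pegReach (mem_insert_self t _))

lemma pegReach_eq_of_isIndepSet (hD : J.IsIndepSet D) : PegReach J D = D := by
  refine subset_antisymm (fun t ⟨E, hE, ht⟩ => ?_) subset_pegReach
  suffices E = D from this ▸ ht
  clear ht
  induction hE with
  | refl => rfl
  | tail _ hmove ih =>
    obtain ⟨u, v, w, huv, -, hu, hv, -⟩ := hmove
    rw [ih] at hu hv
    exact absurd huv (hD hu hv huv.ne)

lemma pegReach_ne_univ_of_isIndepSet (huv : J.Adj u v) (hD : J.IsIndepSet D) :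
    PegReach J D ≠ Set.univ := by
  rw [pegReach_eq_of_isIndepSet hD]
  intro hD_univ
  have hu : u ∈ (D : Set X) := hD_univ ▸ Set.mem_univ u
  have hv : v ∈ (D : Set X) := hD_univ ▸ Set.mem_univ v
  exact hD hu hv huv.ne huv

lemma pegReach_eq_univ_of_eq_top (hJ : J = ⊤) (hD : 2 ≤ D.card) : PegReach J D = Set.univ := by
  obtain ⟨u, hu, v, hv, huv⟩ := one_lt_card.1 hD
  refine Set.eq_univ_of_forall fun t => ?_
  rcases eq_or_ne v t with rfl | hvt
  · exact subset_pegReach hv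
  · exact mem_pegReach_of_adj_s10 hu hv (hJ ▸ huv) (hJ ▸ hvt)

lemma optPeggingNumber_eq_two (huv : u ≠ v) (h : PegReach J {u, v} = Set.univ) :
    OptPeggingNumber J = 2 := by
  refine IsLeast.csInf_eq ⟨⟨two_pos, {u, v}, card_pair huv, h⟩, ?_⟩
  rintro m ⟨hm, D, rfl, hD⟩
  by_contra! hlt
  obtain ⟨x, rfl⟩ := card_eq_one.1 (by omega : D.card = 1)
  have hreach : PegReach J {x} = {x} := by
    simpa using pegReach_eq_of_isIndepSet (J := J) (D := {x}) (by simp)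
  have hu : u ∈ PegReach J {x} := hD ▸ Set.mem_univ u
  have hv : v ∈ PegReach J {x} := hD ▸ Set.mem_univ v
  rw [hreach, Set.mem_singleton_iff] at hu hv
  exact huv (hu.trans hv.symm)

lemma exists_card_eq_pegReach_ne_univ [Finite X] (huv : J.Adj u v) {m : ℕ}
    (hm : m ≤ J.indepNum) : ∃ D : Finset X, D.card = m ∧ PegReach J D ≠ Set.univ := by
  obtain ⟨I, hI⟩ := J.exists_isNIndepSet_indepNum
  obtain ⟨D, hDI, hD⟩ := exists_subset_card_eq (hI.card_eq ▸ hm)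
  exact ⟨D, hD, pegReach_ne_univ_of_isIndepSet huv (hI.isIndepSet.mono (coe_subset.2 hDI))⟩

lemma peggingNumber_eq_indepNum_add_one [Finite X] (huv : J.Adj u v)
    (h : ∀ D : Finset X, D.card = J.indepNum + 1 → PegReach J D = Set.univ) :
    PeggingNumber J = J.indepNum + 1 := by
  refine IsLeast.csInf_eq ⟨⟨J.indepNum.succ_pos, h⟩, ?_⟩
  rintro m ⟨-, hm⟩
  by_contra! hlt
  obtain ⟨D, hD, hne⟩ := exists_card_eq_pegReach_ne_univ huv (Nat.lt_succ_iff.1 hlt)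
  exact hne (hm D hD)

end Pegging

section Join

variable {V W : Type*} {G : SimpleGraph V} {H : SimpleGraph W}

lemma graphJoin_adj_inl_inr (a : V) (b : W) : (GraphJoin G H).Adj (.inl a) (.inr b) := trivial

lemma graphJoin_adj_inr_inl (a : W) (b : V) : (GraphJoin G H).Adj (.inr a) (.inl b) := trivial

lemma isIndepSet_graphJoin_map_inl {s : Finset V} :
    (GraphJoin G H).IsIndepSet ↑(s.map (.inl : V ↪ V ⊕ W)) ↔ G.IsIndepSet s := by
  rw [coe_map, isIndepSet_iff, Function.Embedding.inl.injective.injOn.pairwise_image]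
  rfl

lemma isIndepSet_graphJoin_map_inr {s : Finset W} :
    (GraphJoin G H).IsIndepSet ↑(s.map (.inr : W ↪ V ⊕ W)) ↔ H.IsIndepSet s := by
  rw [coe_map, isIndepSet_iff, Function.Embedding.inr.injective.injOn.pairwise_image]
  rfl

lemma indepNum_graphJoin [Finite V] [Finite W] :
    (GraphJoin G H).indepNum = max G.indepNum H.indepNum := by
  refine le_antisymm ?_ (max_le ?_ ?_)
  · obtain ⟨I, hI, hcard⟩ := (GraphJoin G H).exists_isNIndepSet_indepNum
    have hleft : G.IsIndepSet I.toLeft := fun a ha b hb hab hadj =>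
      hI (mem_toLeft.1 ha) (mem_toLeft.1 hb) (by simpa using hab) hadj
    have hright : H.IsIndepSet I.toRight := fun a ha b hb hab hadj =>
      hI (mem_toRight.1 ha) (mem_toRight.1 hb) (by simpa using hab) hadj
    have hside : I.toLeft = ∅ ∨ I.toRight = ∅ := by
      by_contra! hne
      obtain ⟨a, ha⟩ := hne.1
      obtain ⟨b, hb⟩ := hne.2
      exact hI (mem_toLeft.1 ha) (mem_toRight.1 hb) Sum.inl_ne_inr (graphJoin_adj_inl_inr a b)
    rw [← hcard, ← card_toLeft_add_card_toRight]
    rcases hside with h | h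
    · simpa [h] using hright.card_le_indepNum.trans (le_max_right _ _)
    · simpa [h] using hleft.card_le_indepNum.trans (le_max_left _ _)
  · obtain ⟨I, hI⟩ := G.exists_isNIndepSet_indepNum
    simpa [hI.card_eq] using
      (isIndepSet_graphJoin_map_inl (H := H) |>.2 hI.isIndepSet).card_le_indepNum
  · obtain ⟨I, hI⟩ := H.exists_isNIndepSet_indepNum
    simpa [hI.card_eq] using
      (isIndepSet_graphJoin_map_inr (G := G) |>.2 hI.isIndepSet).card_le_indepNum

variable [DecidableEq V] [DecidableEq W] {D : Finset (V ⊕ W)}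

lemma pegReach_graphJoin_eq_univ_of_inl_of_inr {a : V} {b : W} (ha : .inl a ∈ D)
    (hb : .inr b ∈ D) : PegReach (GraphJoin G H) D = Set.univ := by
  refine Set.eq_univ_of_forall fun t => ?_
  rcases t with c | c
  · exact mem_pegReach_of_adj_s10 ha hb (graphJoin_adj_inl_inr a b) (graphJoin_adj_inr_inl b c)
  · exact mem_pegReach_of_adj_s10 hb ha (graphJoin_adj_inr_inl b a) (graphJoin_adj_inl_inr a c)

-- One move carries the pegs on `a`, `b` to the other side, next to the third peg `z`.
lemma pegReach_graphJoin_eq_univ_of_adj_inl [Nonempty W] {a b : V} {z : V ⊕ W}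
    (ha : .inl a ∈ D) (hb : .inl b ∈ D) (hab : G.Adj a b) (hz : z ∈ D) (hza : z ≠ .inl a)
    (hzb : z ≠ .inl b) : PegReach (GraphJoin G H) D = Set.univ := by
  obtain ⟨w⟩ := ‹Nonempty W›
  rcases z with y | y
  swap
  · exact pegReach_graphJoin_eq_univ_of_inl_of_inr ha hz
  by_cases hw : .inr w ∈ D
  · exact pegReach_graphJoin_eq_univ_of_inl_of_inr ha hw
  refine PegMove.pegReach_eq_univ
    ⟨.inl a, .inl b, .inr w, hab, graphJoin_adj_inl_inr b w, ha, hb, hw, rfl⟩ ?_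
  exact pegReach_graphJoin_eq_univ_of_inl_of_inr (a := y) (by simp [hz, hza, hzb])
    (mem_insert_self _ _)

lemma pegReach_graphJoin_eq_univ_of_adj_inr [Nonempty V] {a b : W} {z : V ⊕ W}
    (ha : .inr a ∈ D) (hb : .inr b ∈ D) (hab : H.Adj a b) (hz : z ∈ D) (hza : z ≠ .inr a)
    (hzb : z ≠ .inr b) : PegReach (GraphJoin G H) D = Set.univ := by
  obtain ⟨w⟩ := ‹Nonempty V›
  rcases z with y | y
  · exact pegReach_graphJoin_eq_univ_of_inl_of_inr hz ha
  by_cases hw : .inl w ∈ D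
  · exact pegReach_graphJoin_eq_univ_of_inl_of_inr hw ha
  refine PegMove.pegReach_eq_univ
    ⟨.inr a, .inr b, .inl w, hab, graphJoin_adj_inr_inl b w, ha, hb, hw, rfl⟩ ?_
  exact pegReach_graphJoin_eq_univ_of_inl_of_inr (b := y) (mem_insert_self _ _)
    (by simp [hz, hza, hzb])

lemma pegReach_graphJoin_eq_univ [Finite V] [Finite W] [Nonempty V] [Nonempty W]
    (hD : D.card = (GraphJoin G H).indepNum + 1) : PegReach (GraphJoin G H) D = Set.univ := by
  by_cases hα : (GraphJoin G H).indepNum ≤ 1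
  · have := one_le_indepNum (J := GraphJoin G H)
    exact pegReach_eq_univ_of_eq_top (eq_top_of_indepNum_le_one hα) (by omega)
  obtain ⟨u, hu, v, hv, huv⟩ : ∃ u ∈ D, ∃ v ∈ D, (GraphJoin G H).Adj u v := by
    by_contra! h
    have hindep : (GraphJoin G H).IsIndepSet ↑D := fun u hu v hv _ => h u hu v hv
    have := hindep.card_le_indepNum
    omega
  obtain ⟨z, hz', hzv⟩ := exists_mem_ne (s := D.erase u) (by
    rw [card_erase_of_mem hu]; omega) v
  obtain ⟨hzu, hz⟩ := mem_erase.1 hz'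
  rcases u with a | a <;> rcases v with b | b
  · exact pegReach_graphJoin_eq_univ_of_adj_inl hu hv huv hz hzu hzv
  · exact pegReach_graphJoin_eq_univ_of_inl_of_inr hu hv
  · exact pegReach_graphJoin_eq_univ_of_inl_of_inr hv hu
  · exact pegReach_graphJoin_eq_univ_of_adj_inr hu hv huv hz hzu hzv

end Join

theorem pegging_join {V W : Type*} [Fintype V] [Fintype W] [DecidableEq V] [DecidableEq W]
    [Nonempty V] [Nonempty W] (G : SimpleGraph V) (H : SimpleGraph W) :
    OptPeggingNumber (GraphJoin G H) = 2 ∧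
      PeggingNumber (GraphJoin G H) = max (_root_.indepNum G) (_root_.indepNum H) + 1 := by
  obtain ⟨a⟩ := ‹Nonempty V›
  obtain ⟨b⟩ := ‹Nonempty W›
  rw [indepNum_eq_simpleGraph_indepNum, indepNum_eq_simpleGraph_indepNum, ← indepNum_graphJoin]
  refine ⟨optPeggingNumber_eq_two (Sum.inl_ne_inr (a := a) (b := b)) ?_,
    peggingNumber_eq_indepNum_add_one (graphJoin_adj_inl_inr a b)
      fun _ => pegReach_graphJoin_eq_univ⟩
  exact pegReach_graphJoin_eq_univ_of_inl_of_inr (b := b) (mem_insert_self _ _) (by simp)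
end

section
/- For any complete multipartite graph G with at least two partite sets, p(G) = 2 and P(G) equals one more than the size of the largest partite set of G. -/
open SimpleGraph Finset

variable {V : Type*} {W : Type*}

/-!
Two pegs in different parts reach everything in one move: a vertex `t` outside the part of
one of them, say `v`, is adjacent to `v`, and `v` is adjacent to the other peg. Conversely, pegs
confined to one part form an independent set, from which no move is possible, so they reach
only themselves. Hence two pegs in different parts are optimal, a single peg is not enough,
every `m + 1` pegs (with `m` the largest part size) meet two parts by pigeonhole, and `m` pegs
filling up a largest part do not.
-/

section Pegging

variable {V : Type*} {G : SimpleGraph V} [DecidableEq V] {D : Finset V}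

lemma mem_pegReach_of_mem {t : V} (ht : t ∈ D) : t ∈ PegReach G D :=
  ⟨D, .refl, ht⟩

lemma pegReach_eq_of_isIndepSet_s11 (hD : G.IsIndepSet (D : Set V)) : PegReach G D = D := by
  refine Set.Subset.antisymm ?_ fun t ht => mem_pegReach_of_mem ht
  rintro t ⟨D', hD', ht⟩
  rcases hD'.cases_head with rfl | ⟨D₁, ⟨u, v, -, huv, -, hu, hv, -⟩, -⟩
  · exact ht
  · exact absurd huv (hD hu hv huv.ne)

lemma pegReach_eq_univ_of_forall_notMem
    (h : ∀ t ∉ D, ∃ u ∈ D, ∃ v ∈ D, G.Adj u v ∧ G.Adj v t) : PegReach G D = Set.univ := by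
  refine Set.eq_univ_of_forall fun t => ?_
  by_cases ht : t ∈ D
  · exact mem_pegReach_of_mem ht
  obtain ⟨u, hu, v, hv, huv, hvt⟩ := h t ht
  exact ⟨_, .single ⟨u, v, t, huv, hvt, hu, hv, ht, rfl⟩, mem_insert_self _ _⟩

end Pegging

section SigmaPart

variable {ι : Type*} {P : ι → Type*} [∀ i, Fintype (P i)] {D : Finset (Σ i, P i)}

lemma card_le_of_forall_fst_eq {i : ι} (hD : ∀ x ∈ D, x.1 = i) :
    D.card ≤ Fintype.card (P i) := by
  calc D.card ≤ (univ.map (Function.Embedding.sigmaMk (β := P) i)).card := by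
        refine card_le_card fun x hx => ?_
        obtain ⟨j, a⟩ := x
        obtain rfl : j = i := hD _ hx
        exact mem_map_of_mem _ (mem_univ a)
    _ = Fintype.card (P i) := by rw [card_map, card_univ]

lemma exists_card_eq_forall_fst_eq {i : ι} {k : ℕ}
    (hk : k ≤ Fintype.card (P i)) :
    ∃ E : Finset (Σ i, P i), E.card = k ∧ ∀ x ∈ E, x.1 = i := by
  obtain ⟨E, -, hE⟩ :=
    exists_subset_card_eq (s := (univ : Finset (P i))) (n := k) (by rwa [card_univ])
  refine ⟨E.map (Function.Embedding.sigmaMk i), by rw [card_map, hE], fun x hx => ?_⟩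
  obtain ⟨a, -, rfl⟩ := mem_map.mp hx
  rfl

end SigmaPart

section CompleteMultipartite

variable {ι : Type*} [DecidableEq ι] {P : ι → Type*} [∀ i, DecidableEq (P i)]
  {D : Finset (Σ i, P i)}

lemma pegReach_completeMultipartiteGraph_eq_univ {x y : Σ i, P i} (hx : x ∈ D) (hy : y ∈ D)
    (hxy : x.1 ≠ y.1) : PegReach (completeMultipartiteGraph P) D = Set.univ := by
  refine pegReach_eq_univ_of_forall_notMem fun t _ => ?_
  by_cases hxt : x.1 = t.1
  · exact ⟨x, hx, y, hy, hxy, fun hyt => hxy (hxt.trans hyt.symm)⟩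
  · exact ⟨y, hy, x, hx, fun hyx => hxy hyx.symm, hxt⟩

lemma pegReach_completeMultipartiteGraph_ne_univ [Nontrivial ι] [∀ i, Nonempty (P i)] {i : ι}
    (hD : ∀ x ∈ D, x.1 = i) : PegReach (completeMultipartiteGraph P) D ≠ Set.univ := by
  have hindep : (completeMultipartiteGraph P).IsIndepSet (D : Set (Σ i, P i)) :=
    fun x hx y hy _ hxy => hxy ((hD x hx).trans (hD y hy).symm)
  obtain ⟨j, hji⟩ := exists_ne i
  rw [pegReach_eq_of_isIndepSet_s11 hindep]
  intro huniv
  have hy : (⟨j, Classical.arbitrary _⟩ : Σ i, P i) ∈ (D : Set (Σ i, P i)) :=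
    huniv ▸ Set.mem_univ _
  exact hji (hD _ hy)

lemma optPeggingNumber_completeMultipartiteGraph [Nontrivial ι] [∀ i, Nonempty (P i)] :
    OptPeggingNumber (completeMultipartiteGraph P) = 2 := by
  refine IsLeast.csInf_eq ⟨?_, ?_⟩
  · obtain ⟨i, j, hij⟩ := exists_pair_ne ι
    let x : Σ i, P i := ⟨i, Classical.arbitrary _⟩
    let y : Σ i, P i := ⟨j, Classical.arbitrary _⟩
    have hxy : x ≠ y := fun h => hij (congrArg Sigma.fst h)
    exact ⟨two_pos, {x, y}, card_pair hxy,
      pegReach_completeMultipartiteGraph_eq_univ (mem_insert_self _ _)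
        (mem_insert_of_mem (mem_singleton_self _)) hij⟩
  · rintro k ⟨hk, D, hDk, hD⟩
    by_contra! hk2
    obtain ⟨x, rfl⟩ := card_eq_one.mp (by omega : D.card = 1)
    exact pegReach_completeMultipartiteGraph_ne_univ (i := x.1)
      (fun y hy => congrArg Sigma.fst (mem_singleton.mp hy)) hD

lemma peggingNumber_completeMultipartiteGraph [Fintype ι] [Nontrivial ι] [∀ i, Fintype (P i)]
    [∀ i, Nonempty (P i)] :
    PeggingNumber (completeMultipartiteGraph P) = (univ.sup fun i => Fintype.card (P i)) + 1 := by
  set m := univ.sup fun i => Fintype.card (P i)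
  refine IsLeast.csInf_eq ⟨⟨m.succ_pos, fun D hD => ?_⟩, fun k ⟨_, hall⟩ => ?_⟩
  · obtain ⟨x, hx⟩ : D.Nonempty := card_pos.mp (by omega)
    have hspread : ∃ y ∈ D, y.1 ≠ x.1 := by
      by_contra! hsame
      have := (card_le_of_forall_fst_eq hsame).trans (le_sup (f := fun i => Fintype.card (P i))
        (mem_univ x.1))
      omega
    obtain ⟨y, hy, hyx⟩ := hspread
    exact pegReach_completeMultipartiteGraph_eq_univ hy hx hyx
  · by_contra! hkm
    obtain ⟨i, -, hi⟩ := exists_mem_eq_sup univ univ_nonempty fun i => Fintype.card (P i)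
    obtain ⟨E, hEk, hE⟩ := exists_card_eq_forall_fst_eq (i := i) (P := P) (k := k) (by omega)
    exact pegReach_completeMultipartiteGraph_ne_univ hE (hall E hEk)

end CompleteMultipartite

theorem pegging_completeMultipartite {ι : Type*} [Fintype ι] [DecidableEq ι]
    (P : ι → Type*) [∀ i, Fintype (P i)] [∀ i, DecidableEq (P i)] [∀ i, Nonempty (P i)]
    (hι : 2 ≤ Fintype.card ι) :
    OptPeggingNumber (SimpleGraph.completeMultipartiteGraph P) = 2 ∧
      PeggingNumber (SimpleGraph.completeMultipartiteGraph P) =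
        (Finset.univ.sup fun i => Fintype.card (P i)) + 1 := by
  have : Nontrivial ι := Fintype.one_lt_card_iff_nontrivial.mp hι
  exact ⟨optPeggingNumber_completeMultipartiteGraph, peggingNumber_completeMultipartiteGraph⟩
end

section
/- For positive integers m, n with min{m,n} ≥ 3, the optimal pegging number of K_m × K_n is 3; if mn > 1 and min{m,n} ≤ 2, it is 2; and if m = n = 1, it is 1. -/
open SimpleGraph Finset

variable {V : Type*} {W : Type*}

/-! With at most one peg no move is possible, and two pegs allow a single jump, after which
the remaining peg is stuck; so two pegs reach only their closed neighbourhood. When both sides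
have at least three vertices, some square shares neither a row nor a column with the two pegs.
Three pegs in one row reach everything: a square in the column of a peg is reached by jumping
over that peg, any other square by first jumping a peg into its column. When one side has at
most two vertices, two adjacent pegs already dominate the rook's graph. -/

namespace PegMove

variable {V : Type*} [DecidableEq V] {G : SimpleGraph V} {D D' : Finset V}

theorem two_le_card (h : PegMove G D D') : 2 ≤ D.card := by
  obtain ⟨u, v, -, huv, -, hu, hv, -⟩ := h
  exact one_lt_card.mpr ⟨u, hu, v, hv, huv.ne⟩

theorem card_add_one (h : PegMove G D D') : D'.card + 1 = D.card := by
  obtain ⟨u, v, w, huv, -, hu, hv, hw, rfl⟩ := h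
  have hvu : v ∈ D.erase u := mem_erase.mpr ⟨huv.ne', hv⟩
  have hw' : w ∉ (D.erase u).erase v := fun h => hw (mem_of_mem_erase (mem_of_mem_erase h))
  rw [card_insert_of_notMem hw', card_erase_of_mem hvu, card_erase_of_mem hu]
  have := one_lt_card.mpr ⟨u, hu, v, hv, huv.ne⟩
  omega

theorem pegReach_subset_s13 (h : PegMove G D D') : PegReach G D' ⊆ PegReach G D :=
  fun _ ⟨E, hE, htE⟩ => ⟨E, hE.head h, htE⟩

end PegMove

section PegReach

variable {V : Type*} [DecidableEq V] {G : SimpleGraph V} {D : Finset V}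

theorem subset_pegReach_s13 : ↑D ⊆ PegReach G D :=
  fun _ ht => ⟨D, .refl, ht⟩

theorem mem_pegReach_of_jump {u v w : V} (huv : G.Adj u v) (hvw : G.Adj v w) (hu : u ∈ D)
    (hv : v ∈ D) : w ∈ PegReach G D := by
  by_cases hw : w ∈ D
  · exact subset_pegReach_s13 hw
  · exact ⟨_, .single ⟨u, v, w, huv, hvw, hu, hv, hw, rfl⟩, mem_insert_self _ _⟩

theorem pegReach_of_card_le_one (h : D.card ≤ 1) : PegReach G D = ↑D := by
  refine Set.Subset.antisymm (fun t ⟨D', hD', ht⟩ => ?_) subset_pegReach_s13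
  rcases hD'.cases_head with rfl | ⟨E, hE, -⟩
  · exact ht
  · exact absurd hE.two_le_card (by omega)

theorem pegReach_subset_of_card_eq_two (h : D.card = 2) :
    PegReach G D ⊆ ↑D ∪ {t | ∃ v ∈ D, G.Adj v t} := by
  rintro t ⟨D', hD', ht⟩
  rcases hD'.cases_head with rfl | ⟨E, hE, hED'⟩
  · exact Or.inl ht
  have hE1 : E.card ≤ 1 := by have := hE.card_add_one; omega
  have htE : t ∈ E := (Set.ext_iff.mp (pegReach_of_card_le_one (G := G) hE1) t).mp ⟨D', hED', ht⟩
  obtain ⟨u, v, w, -, hvw, -, hv, -, rfl⟩ := hE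
  rcases mem_insert.mp htE with rfl | htD
  · exact Or.inr ⟨v, hv, hvw⟩
  · exact Or.inl (mem_of_mem_erase (mem_of_mem_erase htD))

theorem pegReach_ne_univ_of_card_le_one [Fintype V] (hV : 1 < Fintype.card V)
    (h : D.card ≤ 1) : PegReach G D ≠ Set.univ := by
  rw [pegReach_of_card_le_one h, Ne, coe_eq_univ]
  rintro rfl
  exact absurd h (by rw [card_univ]; omega)

theorem pegReach_ne_univ_of_card_eq_two {t : V} (h : D.card = 2) (ht : t ∉ D)
    (hadj : ∀ v ∈ D, ¬ G.Adj v t) : PegReach G D ≠ Set.univ := by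
  intro hD
  rcases pegReach_subset_of_card_eq_two h (hD ▸ Set.mem_univ t) with ht' | ⟨v, hv, hvt⟩
  · exact ht ht'
  · exact hadj v hv hvt

theorem pegReach_pair_eq_univ {a b : V} (hab : G.Adj a b)
    (hdom : ∀ w, w ≠ a → w ≠ b → G.Adj a w ∨ G.Adj b w) : PegReach G {a, b} = Set.univ := by
  refine Set.eq_univ_of_forall fun w => ?_
  by_cases hwa : w = a
  · exact subset_pegReach_s13 (by simp [hwa])
  by_cases hwb : w = b
  · exact subset_pegReach_s13 (by simp [hwb])
  rcases hdom w hwa hwb with haw | hbw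
  · exact mem_pegReach_of_jump hab.symm haw (by simp) (by simp)
  · exact mem_pegReach_of_jump hab hbw (by simp) (by simp)

theorem optPeggingNumber_eq {k : ℕ} (hk : 0 < k)
    (hD : ∃ D : Finset V, D.card = k ∧ PegReach G D = Set.univ)
    (hlt : ∀ D : Finset V, 0 < D.card → D.card < k → PegReach G D ≠ Set.univ) :
    OptPeggingNumber G = k := by
  refine le_antisymm (Nat.sInf_le ⟨hk, hD⟩) (le_csInf ⟨k, hk, hD⟩ ?_)
  rintro j ⟨hj, D, rfl, hDj⟩
  by_contra! hjk
  exact hlt D hj hjk hDj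

end PegReach

abbrev rookGraph (α β : Type*) : SimpleGraph (α × β) := (⊤ : SimpleGraph α) □ (⊤ : SimpleGraph β)

section Rook

variable {α β : Type*}

theorem rookGraph_adj {p q : α × β} :
    (rookGraph α β).Adj p q ↔ p.1 ≠ q.1 ∧ p.2 = q.2 ∨ p.2 ≠ q.2 ∧ p.1 = q.1 := by
  simp [boxProd_adj]

variable [DecidableEq α] [DecidableEq β]

theorem rookGraph_pegReach_ne_univ_of_card_eq_two [Fintype α] [Fintype β]
    (hα : 2 < Fintype.card α) (hβ : 2 < Fintype.card β) {D : Finset (α × β)} (hD : D.card = 2) :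
    PegReach (rookGraph α β) D ≠ Set.univ := by
  obtain ⟨a, b, -, rfl⟩ := card_eq_two.mp hD
  obtain ⟨x, -, hx⟩ := exists_mem_notMem_of_card_lt_card
    (s := {a.1, b.1}) (t := univ) (by rw [card_univ]; exact card_le_two.trans_lt hα)
  obtain ⟨y, -, hy⟩ := exists_mem_notMem_of_card_lt_card
    (s := {a.2, b.2}) (t := univ) (by rw [card_univ]; exact card_le_two.trans_lt hβ)
  simp only [mem_insert, mem_singleton, not_or] at hx hy
  refine pegReach_ne_univ_of_card_eq_two (t := (x, y)) hD ?_ ?_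
  · simp [Prod.ext_iff, hx.1, hx.2]
  · simp [Ne.symm hx.1, Ne.symm hx.2, Ne.symm hy.1, Ne.symm hy.2]

theorem rookGraph_mem_pegReach_of_row {D : Finset (α × β)} {x i : α} {y y' : β} (hyy' : y ≠ y')
    (hy : (x, y) ∈ D) (hy' : (x, y') ∈ D) : (i, y') ∈ PegReach (rookGraph α β) D := by
  by_cases hi : i = x
  · exact subset_pegReach_s13 (hi ▸ hy')
  · exact mem_pegReach_of_jump (u := (x, y)) (v := (x, y')) (rookGraph_adj.mpr (.inr ⟨hyy', rfl⟩))
      (rookGraph_adj.mpr (.inl ⟨Ne.symm hi, rfl⟩)) hy hy'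

theorem rookGraph_pegReach_row_triple_eq_univ (x : α) {y₀ y₁ y₂ : β} (h₀₁ : y₀ ≠ y₁)
    (h₀₂ : y₀ ≠ y₂) (h₁₂ : y₁ ≠ y₂) :
    PegReach (rookGraph α β) {(x, y₀), (x, y₁), (x, y₂)} = Set.univ := by
  refine Set.eq_univ_of_forall fun ⟨i, j⟩ => ?_
  by_cases hj₀ : j = y₀
  · rw [hj₀]; exact rookGraph_mem_pegReach_of_row (x := x) h₀₁.symm (by simp) (by simp)
  by_cases hj₁ : j = y₁
  · rw [hj₁]; exact rookGraph_mem_pegReach_of_row (x := x) h₀₁ (by simp) (by simp)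
  by_cases hj₂ : j = y₂
  · rw [hj₂]; exact rookGraph_mem_pegReach_of_row (x := x) h₀₂ (by simp) (by simp)
  have hmove : PegMove (rookGraph α β) {(x, y₀), (x, y₁), (x, y₂)}
      (insert (x, j)
        ((({(x, y₀), (x, y₁), (x, y₂)} : Finset (α × β)).erase (x, y₀)).erase (x, y₁))) :=
    ⟨(x, y₀), (x, y₁), (x, j), rookGraph_adj.mpr (.inr ⟨h₀₁, rfl⟩),
      rookGraph_adj.mpr (.inr ⟨Ne.symm hj₁, rfl⟩), by simp, by simp, by simp [hj₀, hj₁, hj₂], rfl⟩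
  exact hmove.pegReach_subset_s13
    (rookGraph_mem_pegReach_of_row (x := x) (Ne.symm hj₂) (by simp [h₀₂.symm, h₁₂.symm]) (by simp))

theorem rookGraph_exists_card_three_pegReach_eq_univ [Nonempty α] [Fintype β]
    (hβ : 2 < Fintype.card β) :
    ∃ D : Finset (α × β), D.card = 3 ∧ PegReach (rookGraph α β) D = Set.univ := by
  obtain ⟨y₀, y₁, y₂, h₀₁, h₀₂, h₁₂⟩ := Fintype.two_lt_card_iff.mp hβ
  obtain ⟨x⟩ := ‹Nonempty α›
  exact ⟨_, card_eq_three.mpr ⟨_, _, _, by simp [h₀₁], by simp [h₀₂], by simp [h₁₂], rfl⟩,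
    rookGraph_pegReach_row_triple_eq_univ x h₀₁ h₀₂ h₁₂⟩

end Rook

theorem rookGraph_fin_exists_card_two_pegReach_eq_univ {m n : ℕ} (hmn : 1 < m * n)
    (hmin : min m n ≤ 2) :
    ∃ D : Finset (Fin m × Fin n),
      D.card = 2 ∧ PegReach (rookGraph (Fin m) (Fin n)) D = Set.univ := by
  have hm : 0 < m := Nat.pos_of_ne_zero (by rintro rfl; omega)
  have hn : 0 < n := Nat.pos_of_ne_zero (by rintro rfl; omega)
  have hm1 : m = 1 → 2 ≤ n := by rintro rfl; omega
  have hn1 : n = 1 → 2 ≤ m := by rintro rfl; omega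
  rcases (by omega : (2 ≤ n ∧ (n = 2 ∨ m = 1)) ∨ (2 ≤ m ∧ (m = 2 ∨ n = 1))) with ⟨hn2, h⟩ | ⟨hm2, h⟩
  · refine ⟨_, card_pair (b := ((⟨0, hm⟩, ⟨1, hn2⟩) : Fin m × Fin n))
      (a := (⟨0, hm⟩, ⟨0, hn⟩)) (by simp [Fin.ext_iff]), pegReach_pair_eq_univ ?_ ?_⟩
    · simp [Fin.ext_iff]
    · rintro ⟨⟨i, hi⟩, ⟨j, hj⟩⟩
      simp only [rookGraph_adj, ne_eq, Prod.ext_iff, Fin.ext_iff]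
      omega
  · refine ⟨_, card_pair (b := ((⟨1, hm2⟩, ⟨0, hn⟩) : Fin m × Fin n))
      (a := (⟨0, hm⟩, ⟨0, hn⟩)) (by simp [Fin.ext_iff]), pegReach_pair_eq_univ ?_ ?_⟩
    · simp [Fin.ext_iff]
    · rintro ⟨⟨i, hi⟩, ⟨j, hj⟩⟩
      simp only [rookGraph_adj, ne_eq, Prod.ext_iff, Fin.ext_iff]
      omega

theorem optPeggingNumber_complete_boxProd_general (m n : ℕ) :
    (3 ≤ min m n →
      OptPeggingNumber ((⊤ : SimpleGraph (Fin m)) □ (⊤ : SimpleGraph (Fin n))) = 3) ∧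
    (1 < m * n ∧ min m n ≤ 2 →
      OptPeggingNumber ((⊤ : SimpleGraph (Fin m)) □ (⊤ : SimpleGraph (Fin n))) = 2) ∧
    (m = 1 ∧ n = 1 →
      OptPeggingNumber ((⊤ : SimpleGraph (Fin m)) □ (⊤ : SimpleGraph (Fin n))) = 1) := by
  have hcard : Fintype.card (Fin m × Fin n) = m * n := by simp
  refine ⟨fun hmin => ?_, fun ⟨hmn, hmin⟩ => ?_, fun ⟨hm, hn⟩ => ?_⟩
  · have hm : 2 < m := by omega
    have hn : 2 < n := by omega
    have : Nonempty (Fin m) := ⟨⟨0, by omega⟩⟩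
    refine optPeggingNumber_eq three_pos
      (rookGraph_exists_card_three_pegReach_eq_univ (by simpa using hn)) fun D _ hD3 => ?_
    rcases (by omega : D.card ≤ 1 ∨ D.card = 2) with hD | hD
    · exact pegReach_ne_univ_of_card_le_one (by rw [hcard]; nlinarith) hD
    · exact rookGraph_pegReach_ne_univ_of_card_eq_two (by simpa) (by simpa) hD
  · exact optPeggingNumber_eq two_pos (rookGraph_fin_exists_card_two_pegReach_eq_univ hmn hmin)
      fun D _ hD2 => pegReach_ne_univ_of_card_le_one (hcard ▸ hmn) (by omega)
  · subst hm hn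
    exact optPeggingNumber_eq one_pos
      ⟨univ, rfl, Set.eq_univ_of_forall fun t => subset_pegReach_s13 (mem_univ t)⟩
      fun _ h₀ h₁ => absurd h₁ (by omega)

theorem optPeggingNumber_complete_boxProd (m n : ℕ) (hm : 0 < m) (hn : 0 < n) :
    (3 ≤ min m n →
      OptPeggingNumber ((⊤ : SimpleGraph (Fin m)) □ (⊤ : SimpleGraph (Fin n))) = 3) ∧
    (1 < m * n ∧ min m n ≤ 2 →
      OptPeggingNumber ((⊤ : SimpleGraph (Fin m)) □ (⊤ : SimpleGraph (Fin n))) = 2) ∧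
    (m = 1 ∧ n = 1 →
      OptPeggingNumber ((⊤ : SimpleGraph (Fin m)) □ (⊤ : SimpleGraph (Fin n))) = 1) :=
  optPeggingNumber_complete_boxProd_general m n
end

section
/- For any graph G and positive integer n, the pegging number of the Cartesian product G × K_n is at most the two-pebbling number of G, i.e. P(G × K_n) ≤ π₂(G). -/
open SimpleGraph Finset

variable {V : Type*} {W : Type*}

/-- A pebbling move: remove two pebbles from `u`, add one pebble on an adjacent vertex `v`. -/
def PebMove {V : Type*} (G : SimpleGraph V) [DecidableEq V] (D D' : V → ℕ) : Prop :=
  ∃ u v : V, G.Adj u v ∧ 2 ≤ D u ∧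
    D' = fun x => if x = u then D u - 2 else if x = v then D v + 1 else D x

/-- The pebbling number (`⊤` if no number of pebbles suffices): the least `p > 0` such
that from every distribution of `p` pebbles, every target can receive a pebble. -/
noncomputable def PebblingNumber {V : Type*} [Fintype V] [DecidableEq V]
    (G : SimpleGraph V) : ℕ∞ :=
  sInf {p : ℕ∞ | ∃ k : ℕ, p = k ∧ 0 < k ∧ ∀ D : V → ℕ, (∑ x, D x) = k →
    ∀ t : V, ∃ D', Relation.ReflTransGen (PebMove G) D D' ∧ 1 ≤ D' t}

/-- The two-pebbling number (`⊤` if no number of pebbles suffices): the least `p > 0` such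
that from every distribution of `p` pebbles, every target can receive two pebbles. -/
noncomputable def TwoPebblingNumber {V : Type*} [Fintype V] [DecidableEq V]
    (G : SimpleGraph V) : ℕ∞ :=
  sInf {p : ℕ∞ | ∃ k : ℕ, p = k ∧ 0 < k ∧ ∀ D : V → ℕ, (∑ x, D x) = k →
    ∀ t : V, ∃ D', Relation.ReflTransGen (PebMove G) D D' ∧ 2 ≤ D' t}


/-!
The pegs of `G □ Kₙ` are counted column by column: the column sizes form a distribution of
as many pebbles on `G`, from which some pebbling sequence brings two pebbles to any vertex `t`;
two pegs in the column of `t` reach all of it, the column being a complete graph.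

A pebbling move `u → v` is simulated by pegging `(u, r), (u, ρ)` onto an empty `(v, ρ)`. When
there is no such empty vertex, every pegged row of column `u` is pegged in column `v` too, so
column `v` already holds at least as many pegs as column `u` and the move can be skipped. This
only works if moves are played lazily: to make the column of `v` rich, first make the source of a
pending move into `v` rich. The invariant is that at every vertex the pegs of its column and the
pending moves into it cover the demand there plus two pebbles per pending move out of it.
-/

namespace PeggingBoxProd

variable [DecidableEq V] {G : SimpleGraph V}

def columnCount (E : Finset (V × W)) (u : V) : ℕ :=
  #{p ∈ E | p.1 = u}

def inflow (M : Multiset G.Dart) (u : V) : ℕ :=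
  M.countP (·.snd = u)

def outflow (M : Multiset G.Dart) (u : V) : ℕ :=
  M.countP (·.fst = u)

def Delivers (s : V → ℕ) (M : Multiset G.Dart) (q : V → ℕ) : Prop :=
  ∀ u, q u + 2 * outflow M u ≤ s u + inflow M u

/-- The demand that has to be met before the pebbling move `d` for `q` to be met after it. -/
def demandBefore (d : G.Dart) (q : V → ℕ) (u : V) : ℕ :=
  q u + 2 * (if u = d.fst then 1 else 0) - (if u = d.snd then 1 else 0)

theorem inflow_cons (d : G.Dart) (M : Multiset G.Dart) (u : V) :
    inflow (d ::ₘ M) u = inflow M u + if u = d.snd then 1 else 0 := by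
  simp [inflow, Multiset.countP_cons, eq_comm]

theorem outflow_cons (d : G.Dart) (M : Multiset G.Dart) (u : V) :
    outflow (d ::ₘ M) u = outflow M u + if u = d.fst then 1 else 0 := by
  simp [outflow, Multiset.countP_cons, eq_comm]

theorem demandBefore_add {d : G.Dart} {q : V → ℕ} (hq : 1 ≤ q d.snd) (u : V) :
    demandBefore d q u + (if u = d.snd then 1 else 0) =
      q u + 2 * (if u = d.fst then 1 else 0) := by
  have hne := d.adj.ne
  unfold demandBefore
  split_ifs <;> subst_vars <;> omega

theorem delivers_cons_iff {s q : V → ℕ} {d : G.Dart} {M : Multiset G.Dart}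
    (hq : 1 ≤ q d.snd) :
    Delivers s (d ::ₘ M) q ↔ Delivers s M (demandBefore d q) := by
  refine forall_congr' fun u => ?_
  have := demandBefore_add hq u
  rw [inflow_cons, outflow_cons]
  omega

theorem Delivers.mono {s s' q q' : V → ℕ} {M : Multiset G.Dart} (h : Delivers s M q')
    (hle : ∀ u, q u + s u ≤ q' u + s' u) : Delivers s' M q := fun u => by
  linarith [h u, hle u]

theorem exists_delivers_of_reflTransGen {s q : V → ℕ}
    (h : Relation.ReflTransGen (PebMove G) s q) : ∃ M : Multiset G.Dart, Delivers s M q := by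
  induction h with
  | refl => exact ⟨0, fun u => by simp [inflow, outflow]⟩
  | tail _ hmove ih =>
    obtain ⟨M, hM⟩ := ih
    obtain ⟨x, y, hxy, hx, rfl⟩ := hmove
    refine ⟨⟨(x, y), hxy⟩ ::ₘ M, fun u => ?_⟩
    have := hM u
    have := hxy.ne
    rw [inflow_cons, outflow_cons]
    dsimp only
    split_ifs <;> subst_vars <;> omega

theorem sum_columnCount [Fintype V] (E : Finset (V × W)) : ∑ u, columnCount E u = #E :=
  (card_eq_sum_card_fiberwise fun p _ => mem_univ p.1).symm

theorem exists_ne_mem_of_two_le_columnCount {E : Finset (V × W)} {u : V}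
    (h : 2 ≤ columnCount E u) (ρ : W) : ∃ r ≠ ρ, (u, r) ∈ E := by
  obtain ⟨p, hp, hpρ⟩ := exists_mem_ne h (u, ρ)
  obtain ⟨hpE, rfl⟩ := mem_filter.mp hp
  exact ⟨p.2, fun h => hpρ (Prod.ext rfl h), hpE⟩

theorem columnCount_le_of_forall_mem {E : Finset (V × W)} {u v : V}
    (h : ∀ ρ, (u, ρ) ∈ E → (v, ρ) ∈ E) : columnCount E u ≤ columnCount E v := by
  refine card_le_card_of_injOn (fun p => (v, p.2)) (fun p hp => ?_) fun p hp p' hp' hpp' => ?_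
  · obtain ⟨hpE, rfl⟩ := mem_filter.mp hp
    exact mem_filter.mpr ⟨h p.2 hpE, rfl⟩
  · exact Prod.ext ((mem_filter.mp hp).2.trans (mem_filter.mp hp').2.symm) (Prod.ext_iff.mp hpp').2

variable [DecidableEq W]

theorem columnCount_insert {E : Finset (V × W)} {x : V × W} (hx : x ∉ E) (u : V) :
    columnCount (insert x E) u = columnCount E u + if u = x.1 then 1 else 0 := by
  unfold columnCount
  rw [filter_insert]
  obtain rfl | hu := eq_or_ne u x.1
  · simp only [if_true]
    exact card_insert_of_notMem fun h => hx (mem_filter.mp h).1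
  · simp [hu.symm, hu]

theorem columnCount_erase {E : Finset (V × W)} {x : V × W} (hx : x ∈ E) (u : V) :
    columnCount (E.erase x) u + (if u = x.1 then 1 else 0) = columnCount E u := by
  unfold columnCount
  rw [filter_erase]
  obtain rfl | hu := eq_or_ne u x.1
  · simp only [if_true]
    exact card_erase_add_one (mem_filter.mpr ⟨hx, rfl⟩)
  · rw [erase_eq_of_notMem fun hc => hu (mem_filter.mp hc).2.symm]
    simp [hu]

theorem columnCount_pegMove {E : Finset (V × W)} {a b w : V × W} (ha : a ∈ E) (hb : b ∈ E)
    (hab : a ≠ b) (hw : w ∉ E) (u : V) :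
    columnCount (insert w ((E.erase a).erase b)) u + (if u = a.1 then 1 else 0)
      + (if u = b.1 then 1 else 0) = columnCount E u + if u = w.1 then 1 else 0 := by
  have hb' : b ∈ E.erase a := mem_erase.mpr ⟨hab.symm, hb⟩
  rw [columnCount_insert (fun h => hw (mem_of_mem_erase (mem_of_mem_erase h))),
    ← columnCount_erase ha u, ← columnCount_erase hb' u]
  omega

theorem exists_reflTransGen_two_le_columnCount {E : Finset (V × W)} {M : Multiset G.Dart}
    {q : V → ℕ} {v : V} (h : Delivers (columnCount E) M q) (hv : 2 ≤ q v) :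
    ∃ (E' : Finset (V × W)) (M' : Multiset G.Dart),
      Relation.ReflTransGen (PegMove (G □ (⊤ : SimpleGraph W))) E E' ∧
      Delivers (columnCount E') M' q ∧ Multiset.card M' ≤ Multiset.card M ∧
      2 ≤ columnCount E' v := by
  by_cases hrich : 2 ≤ columnCount E v
  · exact ⟨E, M, .refl, h, le_rfl, hrich⟩
  obtain ⟨d, hdM, rfl⟩ : ∃ d ∈ M, d.snd = v := Multiset.countP_pos.mp
    (show 0 < inflow M v by have := h v; omega)
  obtain ⟨M', hM⟩ := Multiset.exists_cons_of_mem hdM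
  rw [hM] at h
  have hq : 1 ≤ q d.snd := by omega
  obtain ⟨E₁, M₁, hE₁, h₁, hcard₁, hrich₁⟩ :=
    exists_reflTransGen_two_le_columnCount ((delivers_cons_iff hq).mp h)
      (v := d.fst) (by have := demandBefore_add hq d.fst; simp [d.adj.ne] at this; omega)
  by_cases hsub : ∀ ρ, (d.fst, ρ) ∈ E₁ → (d.snd, ρ) ∈ E₁
  · refine ⟨E₁, d ::ₘ M₁, hE₁, (delivers_cons_iff hq).mpr h₁, ?_,
      hrich₁.trans (columnCount_le_of_forall_mem hsub)⟩
    simpa [hM] using hcard₁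
  push Not at hsub
  obtain ⟨ρ, hρ, hvρ⟩ := hsub
  obtain ⟨r, hrρ, hr⟩ := exists_ne_mem_of_two_le_columnCount hrich₁ ρ
  set E₂ := insert (d.snd, ρ) ((E₁.erase (d.fst, r)).erase (d.fst, ρ)) with hE₂
  have hmove : PegMove (G □ (⊤ : SimpleGraph W)) E₁ E₂ :=
    ⟨(d.fst, r), (d.fst, ρ), (d.snd, ρ), by simpa using hrρ, by simp [d.adj], hr, hρ, hvρ,
      rfl⟩
  have h₂ : Delivers (columnCount E₂) M₁ q := h₁.mono fun u => by
    have := demandBefore_add hq u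
    have := columnCount_pegMove hr hρ (by simpa using hrρ) hvρ u
    simp only [← hE₂] at this
    omega
  obtain ⟨E₃, M₃, hE₃, h₃, hcard₃, hrich₃⟩ := exists_reflTransGen_two_le_columnCount h₂ hv
  refine ⟨E₃, M₃, (hE₁.tail hmove).trans hE₃, h₃, ?_, hrich₃⟩
  rw [hM, Multiset.card_cons]
  omega
termination_by Multiset.card M
decreasing_by all_goals rw [hM, Multiset.card_cons]; omega

theorem mem_pegReach_boxProd_top {E : Finset (V × W)} {t : V}
    (h : ∃ D, Relation.ReflTransGen (PebMove G) (columnCount E) D ∧ 2 ≤ D t) (j : W) :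
    (t, j) ∈ PegReach (G □ ⊤) E := by
  obtain ⟨D, hD, ht⟩ := h
  obtain ⟨M, hM⟩ := exists_delivers_of_reflTransGen hD
  obtain ⟨E', -, hE', -, -, h2⟩ := exists_reflTransGen_two_le_columnCount hM ht
  by_cases hj : (t, j) ∈ E'
  · exact ⟨E', hE', hj⟩
  obtain ⟨y, hyj, hy⟩ := exists_ne_mem_of_two_le_columnCount h2 j
  obtain ⟨x, hxy, hx⟩ := exists_ne_mem_of_two_le_columnCount h2 y
  have hmove : PegMove (G □ ⊤) E' (insert (t, j) ((E'.erase (t, x)).erase (t, y))) :=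
    ⟨(t, x), (t, y), (t, j), by simpa, by simpa using hyj, hx, hy, hj, rfl⟩
  exact ⟨_, hE'.tail hmove, mem_insert_self _ _⟩

end PeggingBoxProd

open PeggingBoxProd

theorem peggingNumber_boxProd_complete_le_twoPebbling_general {V : Type*} [Fintype V] [DecidableEq V]
    (G : SimpleGraph V) (n : ℕ) :
    (PeggingNumber (G □ (⊤ : SimpleGraph (Fin n))) : ℕ∞) ≤ TwoPebblingNumber G := by
  refine le_sInf ?_
  rintro _ ⟨k, rfl, hk0, hk⟩
  have hfull : ∀ E : Finset (V × Fin n), #E = k → PegReach (G □ ⊤) E = Set.univ :=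
    fun E hE => Set.eq_univ_of_forall fun ⟨t, j⟩ =>
      mem_pegReach_boxProd_top (hk _ ((sum_columnCount E).trans hE) t) j
  have : PeggingNumber (G □ (⊤ : SimpleGraph (Fin n))) ≤ k := Nat.sInf_le ⟨hk0, hfull⟩
  exact_mod_cast this

theorem peggingNumber_boxProd_complete_le_twoPebbling {V : Type*} [Fintype V] [DecidableEq V]
    (G : SimpleGraph V) (n : ℕ) (hn : 0 < n) :
    (PeggingNumber (G □ (⊤ : SimpleGraph (Fin n))) : ℕ∞) ≤ TwoPebblingNumber G :=
  peggingNumber_boxProd_complete_le_twoPebbling_general G n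
end

section
/- For any distributions D on G and E on H, the set Reach(D) × Reach(E) is contained in Reach(D × E), where D × E is viewed as a distribution on the Cartesian product G × H. -/
open SimpleGraph Finset

variable {V : Type*} {W : Type*}

/-! A move of `G` played inside one layer `V × {e}` of `G □ H` is a move of `G □ H` that leaves
the pegs outside the layer alone, so a move sequence `D →* D'` can be replayed layer by layer,
carrying `D ×ˢ E` to `D' ×ˢ E`. By the symmetry `G □ H ≃g H □ G` the same holds in the second
coordinate, and composing the two sequences reaches `D' ×ˢ E'`, which contains `(t, u)`. -/

namespace PegMove

variable {V V' : Type*} [DecidableEq V] [DecidableEq V'] {G : SimpleGraph V}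
  {G' : SimpleGraph V'}

theorem map_union (f : G ↪g G') {A B : Finset V} {C : Finset V'} (h : PegMove G A B)
    (hC : ∀ x ∈ C, x ∉ Set.range f) :
    PegMove G' (A.map f.toEmbedding ∪ C) (B.map f.toEmbedding ∪ C) := by
  obtain ⟨u, v, w, huv, hvw, hu, hv, hw, rfl⟩ := h
  have hfC : ∀ x, f x ∉ C := fun x hx => hC _ hx ⟨x, rfl⟩
  refine ⟨f u, f v, f w, f.map_adj_iff.2 huv, f.map_adj_iff.2 hvw, by simp [hu], by simp [hv],
    by simp [hw, hfC], ?_⟩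
  ext x
  by_cases hx : x ∈ Set.range f
  · obtain ⟨x, rfl⟩ := hx
    simp [hfC, f.injective.eq_iff]
  · simp only [Set.mem_range, not_exists] at hx
    simp [hx, Ne.symm (hx _)]

theorem reflTransGen_map_union (f : G ↪g G') {A B : Finset V} {C : Finset V'}
    (h : Relation.ReflTransGen (PegMove G) A B) (hC : ∀ x ∈ C, x ∉ Set.range f) :
    Relation.ReflTransGen (PegMove G') (A.map f.toEmbedding ∪ C) (B.map f.toEmbedding ∪ C) :=
  Relation.ReflTransGen.lift (fun A => A.map f.toEmbedding ∪ C)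
    (fun _ _ hAB => hAB.map_union f hC) A B h

end PegMove

section BoxProd

variable {V W : Type*} [DecidableEq V] [DecidableEq W]

theorem reflTransGen_pegMove_boxProd_left {G : SimpleGraph V} (H : SimpleGraph W) {D D' : Finset V}
    (h : Relation.ReflTransGen (PegMove G) D D') (E : Finset W) :
    Relation.ReflTransGen (PegMove (G □ H)) (D ×ˢ E) (D' ×ˢ E) := by
  -- `C` carries the layers that have already been moved.
  suffices ∀ C : Finset (V × W), (∀ p ∈ C, p.2 ∉ E) →
      Relation.ReflTransGen (PegMove (G □ H)) (D ×ˢ E ∪ C) (D' ×ˢ E ∪ C) by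
    simpa using this ∅ (by simp)
  induction E using Finset.induction_on with
  | empty => exact fun _ _ => by simpa using .refl
  | @insert e E he ih =>
    intro C hC
    have hlayer : ∀ A : Finset V, A.map (boxProdLeft G H e).toEmbedding = A ×ˢ {e} := by
      intro A; ext; simp [eq_comm]
    have hrange : ∀ A : Finset V, ∀ p ∈ A ×ˢ E ∪ C, p ∉ Set.range (boxProdLeft G H e) := by
      rintro A p hp ⟨a, rfl⟩
      simp only [mem_union, mem_product, boxProdLeft_apply] at hp
      exact hp.elim (fun h => he h.2) (fun h => hC _ h (mem_insert_self e E))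
    have hmoveLayer := PegMove.reflTransGen_map_union (boxProdLeft G H e) h (hrange D)
    have hmoveRest := ih (D' ×ˢ {e} ∪ C) (by
      intro p hp
      simp only [mem_union, mem_product, mem_singleton] at hp
      exact hp.elim (fun h => h.2 ▸ he) (fun h hE => hC _ h (mem_insert_of_mem hE)))
    rw [union_left_comm, union_left_comm (D' ×ˢ E)] at hmoveRest
    simp only [hlayer] at hmoveLayer
    simpa only [insert_eq, product_union, union_assoc] using hmoveLayer.trans hmoveRest

theorem reflTransGen_pegMove_boxProd_right (G : SimpleGraph V) {H : SimpleGraph W} {E E' : Finset W}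
    (h : Relation.ReflTransGen (PegMove H) E E') (D : Finset V) :
    Relation.ReflTransGen (PegMove (G □ H)) (D ×ˢ E) (D ×ˢ E') := by
  have hswap : ∀ E : Finset W, (E ×ˢ D).map (boxProdComm H G).toEmbedding.toEmbedding = D ×ˢ E :=
    fun E => map_swap_product D E
  simpa [hswap] using PegMove.reflTransGen_map_union (boxProdComm H G).toEmbedding
    (reflTransGen_pegMove_boxProd_left G h D) (C := ∅) (by simp)

end BoxProd

theorem pegReach_boxProd {V W : Type*} [DecidableEq V] [DecidableEq W]
    (G : SimpleGraph V) (H : SimpleGraph W) (D : Finset V) (E : Finset W) :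
    ∀ t ∈ PegReach G D, ∀ u ∈ PegReach H E, (t, u) ∈ PegReach (G □ H) (D ×ˢ E) := by
  rintro t ⟨D', hD, ht⟩ u ⟨E', hE, hu⟩
  exact ⟨D' ×ˢ E', (reflTransGen_pegMove_boxProd_left H hD E).trans
    (reflTransGen_pegMove_boxProd_right G hE D'), mem_product.mpr ⟨ht, hu⟩⟩
end

section
/- For any graphs G and H, the optimal pegging number of the Cartesian product satisfies p(G × H) ≤ p(G)·p(H). -/
open SimpleGraph Finset

variable {V : Type*} {W : Type*}

/-! If `DG` and `DH` have full reach in `G` and `H`, so does `DG ×ˢ DH` in `G □ H`. To peg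
`(x, y)`, first replay in every column `{a} × W`, `a ∈ DG`, the moves of `H` that bring a peg
to `y`; the row `V × {y}` then carries a copy of `DG`, on which one replays the moves of `G`
that bring a peg to `x`. Moves inside a fibre never touch the pegs outside it, because a peg
move only needs an injective graph homomorphism to be transported. -/

namespace PegMove

variable {V' : Type*} [DecidableEq V] [DecidableEq V'] {G : SimpleGraph V}
  {G' : SimpleGraph V'}

theorem map_union_s18 (f : Copy G G') {T : Finset V'} (hT : ∀ x, f x ∉ T) {D D' : Finset V}
    (h : PegMove G D D') :
    PegMove G' (D.map f.toEmbedding ∪ T) (D'.map f.toEmbedding ∪ T) := by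
  obtain ⟨u, v, w, huv, hvw, hu, hv, hw, rfl⟩ := h
  refine ⟨f u, f v, f w, f.toHom.map_adj huv, f.toHom.map_adj hvw, ?_, ?_, ?_, ?_⟩
  · exact mem_union_left _ (mem_map_of_mem f.toEmbedding hu)
  · exact mem_union_left _ (mem_map_of_mem f.toEmbedding hv)
  · rw [mem_union, not_or]
    exact ⟨fun h ↦ hw ((mem_map' f.toEmbedding).1 h), hT w⟩
  · rw [map_insert, map_erase, map_erase, insert_union, erase_union_distrib,
      erase_union_distrib, erase_eq_of_notMem (hT u), erase_eq_of_notMem (hT v)]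
    rfl

theorem reflTransGen_map_union_s18 (f : Copy G G') {T : Finset V'} (hT : ∀ x, f x ∉ T)
    {D D' : Finset V} (h : Relation.ReflTransGen (PegMove G) D D') :
    Relation.ReflTransGen (PegMove G')
      (D.map f.toEmbedding ∪ T) (D'.map f.toEmbedding ∪ T) :=
  h.lift (fun D ↦ D.map f.toEmbedding ∪ T) fun _ _ ↦ map_union_s18 f hT

end PegMove

section BoxProd

variable [DecidableEq V] [DecidableEq W] {G : SimpleGraph V} {H : SimpleGraph W}

theorem PegMove.reflTransGen_boxProd_product_union {C C' : Finset W}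
    (h : Relation.ReflTransGen (PegMove H) C C') (A : Finset V) {T : Finset (V × W)}
    (hT : ∀ p ∈ T, p.1 ∉ A) :
    Relation.ReflTransGen (PegMove (G □ H)) (A ×ˢ C ∪ T) (A ×ˢ C' ∪ T) := by
  induction A using Finset.induction generalizing T with
  | empty => simpa using Relation.ReflTransGen.refl
  | @insert a A ha ih =>
    have hcol : ∀ y, boxProdRight G H a y ∉ A ×ˢ C ∪ T := fun y hy ↦ by
      rcases mem_union.1 hy with hy | hy
      · exact ha (mem_product.1 hy).1
      · exact hT _ hy (mem_insert_self a A)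
    have hT' : ∀ p ∈ {a} ×ˢ C' ∪ T, p.1 ∉ A := fun p hp hpA ↦ by
      rcases mem_union.1 hp with hp | hp
      · exact ha (mem_singleton.1 (mem_product.1 hp).1 ▸ hpA)
      · exact hT p hp (mem_insert_of_mem hpA)
    calc (insert a A) ×ˢ C ∪ T
        = C.map (boxProdRight G H a).toCopy.toEmbedding ∪ (A ×ˢ C ∪ T) := by
          rw [insert_eq, union_product, singleton_product, union_assoc]; rfl
      Relation.ReflTransGen (PegMove (G □ H)) _
          (C'.map (boxProdRight G H a).toCopy.toEmbedding ∪ (A ×ˢ C ∪ T)) :=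
          reflTransGen_map_union_s18 _ hcol h
      _ = A ×ˢ C ∪ ({a} ×ˢ C' ∪ T) := by
          rw [singleton_product, union_left_comm]; rfl
      Relation.ReflTransGen (PegMove (G □ H)) _ (A ×ˢ C' ∪ ({a} ×ˢ C' ∪ T)) := ih hT'
      _ = (insert a A) ×ˢ C' ∪ T := by
          rw [insert_eq, union_product, union_left_comm, union_assoc]

theorem prod_pegReach_subset (DG : Finset V) (DH : Finset W) :
    PegReach G DG ×ˢ PegReach H DH ⊆ PegReach (G □ H) (DG ×ˢ DH) := by
  rintro ⟨x, y⟩ ⟨⟨B, hB, hxB : x ∈ B⟩, ⟨C, hC, hyC : y ∈ C⟩⟩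
  have hrow : ∀ x', boxProdLeft G H y x' ∉ DG ×ˢ C.erase y := by simp
  refine ⟨B.map (boxProdLeft G H y).toCopy.toEmbedding ∪ DG ×ˢ C.erase y, ?_,
    mem_union_left _ (mem_map_of_mem _ hxB)⟩
  calc DG ×ˢ DH = DG ×ˢ DH ∪ ∅ := (union_empty _).symm
    Relation.ReflTransGen (PegMove (G □ H)) _ (DG ×ˢ C ∪ ∅) :=
        PegMove.reflTransGen_boxProd_product_union hC DG (by simp)
    _ = DG.map (boxProdLeft G H y).toCopy.toEmbedding ∪ DG ×ˢ C.erase y := by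
        conv_lhs =>
          rw [union_empty, ← insert_erase hyC, insert_eq, product_union, product_singleton]
        rfl
    Relation.ReflTransGen (PegMove (G □ H)) _ _ :=
        PegMove.reflTransGen_map_union_s18 _ hrow hB

end BoxProd

section OptPeggingNumber

variable [DecidableEq V] (G : SimpleGraph V)

theorem optPeggingNumber_le_card {D : Finset V} (hD : D.Nonempty)
    (hreach : PegReach G D = Set.univ) : OptPeggingNumber G ≤ D.card :=
  Nat.sInf_le ⟨hD.card_pos, D, rfl, hreach⟩

theorem optPeggingNumber_of_isEmpty [IsEmpty V] : OptPeggingNumber G = 0 := by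
  refine Nat.sInf_eq_zero.2 (Or.inr (Set.eq_empty_of_forall_notMem ?_))
  rintro k ⟨hk, D, rfl, -⟩
  exact (card_pos.1 hk).ne_empty (eq_empty_of_isEmpty D)

theorem exists_pegReach_eq_univ_card_eq [Fintype V] [Nonempty V] :
    ∃ D : Finset V, D.Nonempty ∧ D.card = OptPeggingNumber G ∧ PegReach G D = Set.univ := by
  have hfull : Fintype.card V ∈
      {k | 0 < k ∧ ∃ D : Finset V, D.card = k ∧ PegReach G D = Set.univ} :=
    ⟨Fintype.card_pos, univ, card_univ, Set.eq_univ_of_forall fun t ↦ ⟨univ, .refl, mem_univ t⟩⟩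
  obtain ⟨hpos, D, hcard, hreach⟩ := Nat.sInf_mem ⟨_, hfull⟩
  exact ⟨D, card_pos.1 (hcard ▸ hpos), hcard, hreach⟩

end OptPeggingNumber

theorem optPeggingNumber_boxProd_le {V W : Type*} [Fintype V] [Fintype W]
    [DecidableEq V] [DecidableEq W] (G : SimpleGraph V) (H : SimpleGraph W) :
    OptPeggingNumber (G □ H) ≤ OptPeggingNumber G * OptPeggingNumber H := by
  rcases isEmpty_or_nonempty V with hV | hV
  · simp [optPeggingNumber_of_isEmpty]
  rcases isEmpty_or_nonempty W with hW | hW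
  · simp [optPeggingNumber_of_isEmpty]
  obtain ⟨DG, hDG, hcardG, hreachG⟩ := exists_pegReach_eq_univ_card_eq G
  obtain ⟨DH, hDH, hcardH, hreachH⟩ := exists_pegReach_eq_univ_card_eq H
  have hreach : PegReach (G □ H) (DG ×ˢ DH) = Set.univ := by
    have := prod_pegReach_subset (G := G) (H := H) DG DH
    rwa [hreachG, hreachH, Set.univ_prod_univ, Set.univ_subset_iff] at this
  calc OptPeggingNumber (G □ H) ≤ (DG ×ˢ DH).card :=
        optPeggingNumber_le_card _ (hDG.product hDH) hreach
    _ = OptPeggingNumber G * OptPeggingNumber H := by rw [card_product, hcardG, hcardH]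
end
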